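/- arXiv:1112.3559 — 4 statements merged into one kernel-verified Lean document; each statement's English description precedes it below -/
import Mathlib

section
/- Let f : I → ℝ where I ⊆ ℝ is an interval, f three times differentiable on the interior I° with f''' integrable on [a,b], where a, b ∈ I° with a < b. Suppose |f'''|^q is convex on [a,b] for some q > 1, and let p > 1 with 1/p + 1/q = 1. Then |∫_a^b f(x) dx − ((b−a)/6)·[f(a) + 4·f((a+b)/2) + f(b)]| ≤ ((b−a)^4/96)·(1/4)^{1/q}·(Γ(2p+1)·Γ(p+1)/Γ(3p+2))^{1/p} · { (|f'''(a)|^q + 3|f'''(b)|^q)^{1/q} + (3|f'''(a)|^q + |f'''(b)|^q)^{1/q} }. -/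
/-!
Three integrations by parts against the Peano kernel `κ x = (x - a) ^ 2 * (m - x) / 6` of
`[a, m]`, `m = (a + b) / 2`, and against its mirror image on `[m, b]` write the Simpson error as
`∫ x in a..m, κ x * (f''' x - f''' (a + b - x))`. On each half, Hölder's inequality splits off the
kernel, whose `p`-th power integrates to a rescaled Beta integral `Γ(2p+1) Γ(p+1) / Γ(3p+2)`, and
leaves the integral of `|f'''| ^ q`, which convexity bounds by the integral of its chord over
`[a, b]`.
-/

open MeasureTheory Real Set

theorem integral_cubic_mul_third_deriv_eq {f f' f'' f''' : ℝ → ℝ} {u v : ℝ}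
    (hf : ∀ x ∈ uIcc u v, HasDerivAt f (f' x) x)
    (hf' : ∀ x ∈ uIcc u v, HasDerivAt f' (f'' x) x)
    (hf'' : ∀ x ∈ uIcc u v, HasDerivAt f'' (f''' x) x)
    (hf''' : IntervalIntegrable f''' volume u v) :
    ∫ x in u..v, (x - u) ^ 2 * (v - x) / 6 * f''' x =
      (∫ x in u..v, f x) - (v - u) / 3 * f u - 2 * (v - u) / 3 * f v
        + (v - u) ^ 2 / 6 * f' v := by
  -- `κ x = (x - u) ^ 2 * (v - x) / 6` has `κ''' = -1`, so `κ f'' - κ' f' + κ'' f` is an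
  -- antiderivative of `κ f''' - f`
  have hF : ∀ x ∈ uIcc u v, HasDerivAt
      (fun x => (x - u) ^ 2 * (v - x) / 6 * f'' x - (x - u) * (2 * v + u - 3 * x) / 6 * f' x
        + (v + 2 * u - 3 * x) / 3 * f x)
      ((x - u) ^ 2 * (v - x) / 6 * f''' x - f x) x := by
    intro x hx
    have hκ : HasDerivAt (fun y => (y - u) ^ 2 * (v - y) / 6)
        ((x - u) * (2 * v + u - 3 * x) / 6) x :=
      ((((hasDerivAt_id' x).sub_const u).pow 2).mul ((hasDerivAt_id' x).const_sub v)).div_const 6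
        |>.congr_deriv (by simp only [Pi.pow_apply]; ring)
    have hκ' : HasDerivAt (fun y => (y - u) * (2 * v + u - 3 * y) / 6)
        ((v + 2 * u - 3 * x) / 3) x :=
      (((hasDerivAt_id' x).sub_const u).mul
        (((hasDerivAt_id' x).const_mul 3).const_sub _)).div_const 6 |>.congr_deriv (by ring)
    have hκ'' : HasDerivAt (fun y => (v + 2 * u - 3 * y) / 3) (-1) x :=
      (((hasDerivAt_id' x).const_mul 3).const_sub _).div_const 3 |>.congr_deriv (by ring)
    exact ((hκ.mul (hf'' x hx)).sub (hκ'.mul (hf' x hx))).add (hκ''.mul (hf x hx))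
      |>.congr_deriv (by ring)
  have hfi : IntervalIntegrable f volume u v :=
    ContinuousOn.intervalIntegrable fun x hx => (hf x hx).continuousAt.continuousWithinAt
  have hκi : IntervalIntegrable (fun x => (x - u) ^ 2 * (v - x) / 6 * f''' x) volume u v :=
    hf'''.continuousOn_mul (by fun_prop)
  have hFTC := intervalIntegral.integral_eq_sub_of_hasDerivAt hF (hκi.sub hfi)
  rw [intervalIntegral.integral_sub hκi hfi] at hFTC
  linear_combination hFTC

theorem simpson_error_eq_integral {f f' f'' f''' : ℝ → ℝ} {a b : ℝ} (hab : a ≤ b)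
    (hf : ∀ x ∈ Icc a b, HasDerivAt f (f' x) x)
    (hf' : ∀ x ∈ Icc a b, HasDerivAt f' (f'' x) x)
    (hf'' : ∀ x ∈ Icc a b, HasDerivAt f'' (f''' x) x)
    (hf''' : IntervalIntegrable f''' volume a b) :
    (∫ x in a..b, f x) - (b - a) / 6 * (f a + 4 * f ((a + b) / 2) + f b) =
      (∫ x in a..(a + b) / 2, (x - a) ^ 2 * ((a + b) / 2 - x) / 6 * f''' x) -
        ∫ x in a..(a + b) / 2, (x - a) ^ 2 * ((a + b) / 2 - x) / 6 * f''' (a + b - x) := by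
  have hm : (a + b) / 2 ∈ uIcc a b := by rw [uIcc_of_le hab]; constructor <;> linarith
  set m := (a + b) / 2
  rw [← uIcc_of_le hab] at hf hf' hf''
  have hl : uIcc a m ⊆ uIcc a b := uIcc_subset_uIcc left_mem_uIcc hm
  have hr : uIcc b m ⊆ uIcc a b := uIcc_subset_uIcc right_mem_uIcc hm
  have hfi : IntervalIntegrable f volume a b :=
    ContinuousOn.intervalIntegrable fun x hx => (hf x hx).continuousAt.continuousWithinAt
  have hleft := integral_cubic_mul_third_deriv_eq (fun x hx => hf x (hl hx))
    (fun x hx => hf' x (hl hx)) (fun x hx => hf'' x (hl hx)) (hf'''.mono_set hl)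
  have hright := integral_cubic_mul_third_deriv_eq (fun x hx => hf x (hr hx))
    (fun x hx => hf' x (hr hx)) (fun x hx => hf'' x (hr hx)) (hf'''.mono_set hr)
  -- `x ↦ a + b - x` carries the kernel of `[b, m]` to minus the kernel of `[a, m]`
  have hreflect : ∫ x in a..m, (x - a) ^ 2 * (m - x) / 6 * f''' (a + b - x) =
      ∫ x in b..m, (x - b) ^ 2 * (m - x) / 6 * f''' x := by
    have := intervalIntegral.integral_comp_sub_left (a := a) (b := m)
      (fun x => (x - b) ^ 2 * (m - x) / 6 * f''' x) (a + b)
    rw [show a + b - m = m by ring, add_sub_cancel_left] at this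
    rw [intervalIntegral.integral_symm m b, ← this, ← intervalIntegral.integral_neg]
    exact intervalIntegral.integral_congr fun x _ => by ring
  rw [hreflect, hleft, hright, intervalIntegral.integral_symm m b,
    ← intervalIntegral.integral_add_adjacent_intervals (hfi.mono_set hl)
      (hfi.mono_set (uIcc_subset_uIcc hm right_mem_uIcc))]
  ring

theorem integral_rpow_mul_one_sub_rpow {r s : ℝ} (hr : -1 < r) (hs : -1 < s) :
    ∫ x in (0 : ℝ)..1, x ^ r * (1 - x) ^ s =
      Gamma (r + 1) * Gamma (s + 1) / Gamma (r + s + 2) := by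
  have hbeta : Complex.betaIntegral ↑(r + 1) ↑(s + 1) =
      ↑(∫ x in (0 : ℝ)..1, x ^ r * (1 - x) ^ s) := by
    rw [Complex.betaIntegral, ← intervalIntegral.integral_ofReal]
    refine intervalIntegral.integral_congr fun x hx => ?_
    rw [uIcc_of_le zero_le_one] at hx
    simp only [Complex.ofReal_mul, Complex.ofReal_cpow hx.1,
      Complex.ofReal_cpow (sub_nonneg.2 hx.2), Complex.ofReal_add, Complex.ofReal_one,
      Complex.ofReal_sub, add_sub_cancel_right]
  have key := Complex.Gamma_mul_Gamma_eq_betaIntegral (s := ↑(r + 1)) (t := ↑(s + 1))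
    (by rw [Complex.ofReal_re]; linarith) (by rw [Complex.ofReal_re]; linarith)
  rw [hbeta, ← Complex.ofReal_add, Complex.Gamma_ofReal, Complex.Gamma_ofReal,
    Complex.Gamma_ofReal, ← Complex.ofReal_mul, ← Complex.ofReal_mul, Complex.ofReal_inj,
    show r + 1 + (s + 1) = r + s + 2 by ring] at key
  rw [key, mul_div_cancel_left₀ _ (Gamma_pos_of_pos (by linarith)).ne']

theorem integral_sub_rpow_mul_sub_rpow {a b r s : ℝ} (hab : a < b) (hr : -1 < r)
    (hs : -1 < s) :
    ∫ x in a..b, (x - a) ^ r * (b - x) ^ s =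
      (b - a) ^ (r + s + 1) * (Gamma (r + 1) * Gamma (s + 1) / Gamma (r + s + 2)) := by
  have hba : 0 < b - a := sub_pos.2 hab
  have hscale : ∫ x in a..b, (x - a) ^ r * (b - x) ^ s =
      (b - a) * ∫ t in (0 : ℝ)..1, (b - a) ^ (r + s) * (t ^ r * (1 - t) ^ s) := by
    have := intervalIntegral.smul_integral_comp_add_mul (a := 0) (b := 1)
      (fun x => (x - a) ^ r * (b - x) ^ s) (b - a) a
    simp only [mul_zero, add_zero, mul_one, add_sub_cancel, smul_eq_mul] at this
    rw [← this]
    congr 1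
    refine intervalIntegral.integral_congr fun t ht => ?_
    rw [uIcc_of_le zero_le_one] at ht
    simp only [add_sub_cancel_left, rpow_add hba,
      show b - (a + (b - a) * t) = (b - a) * (1 - t) by ring,
      mul_rpow hba.le ht.1, mul_rpow hba.le (sub_nonneg.2 ht.2)]
    ring
  rw [hscale, intervalIntegral.integral_const_mul, integral_rpow_mul_one_sub_rpow hr hs,
    rpow_add hba (r + s) 1, rpow_one]
  ring

theorem integral_abs_cubic_rpow {u v p : ℝ} (huv : u < v) (hp : -1 / 2 < p) :
    ∫ x in u..v, |(x - u) ^ 2 * (v - x) / 6| ^ p =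
      (v - u) ^ (3 * p + 1) * (Gamma (2 * p + 1) * Gamma (p + 1) / Gamma (3 * p + 2)) / 6 ^ p := by
  have := integral_sub_rpow_mul_sub_rpow huv (r := 2 * p) (s := p) (by linarith) (by linarith)
  rw [show 2 * p + p + 1 = 3 * p + 1 by ring, show 2 * p + p + 2 = 3 * p + 2 by ring] at this
  rw [← this, ← intervalIntegral.integral_div]
  refine intervalIntegral.integral_congr fun x hx => ?_
  rw [uIcc_of_le huv.le] at hx
  have hxu : 0 ≤ x - u := sub_nonneg.2 hx.1
  have hvx : 0 ≤ v - x := sub_nonneg.2 hx.2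
  rw [abs_of_nonneg (by positivity), div_rpow (by positivity) (by norm_num),
    mul_rpow (by positivity) hvx, ← rpow_natCast_mul hxu, Nat.cast_ofNat]

theorem abs_intervalIntegral_mul_le_Lp_mul_Lq {f g : ℝ → ℝ} {a b p q : ℝ} (hab : a ≤ b)
    (hpq : p.HolderConjugate q) (hf : AEStronglyMeasurable f (volume.restrict (Ioc a b)))
    (hg : AEStronglyMeasurable g (volume.restrict (Ioc a b)))
    (hfp : IntervalIntegrable (fun x => |f x| ^ p) volume a b)
    (hgq : IntervalIntegrable (fun x => |g x| ^ q) volume a b) :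
    |∫ x in a..b, f x * g x| ≤
      (∫ x in a..b, |f x| ^ p) ^ (1 / p) * (∫ x in a..b, |g x| ^ q) ^ (1 / q) := by
  have memLp {h : ℝ → ℝ} {r : ℝ} (hr : 0 < r)
      (hm : AEStronglyMeasurable h (volume.restrict (Ioc a b)))
      (hi : IntervalIntegrable (fun x => |h x| ^ r) volume a b) :
      MemLp h (ENNReal.ofReal r) (volume.restrict (Ioc a b)) := by
    refine (integrable_norm_rpow_iff hm (by simpa using hr) ENNReal.ofReal_ne_top).1 ?_
    simp only [ENNReal.toReal_ofReal hr.le, norm_eq_abs]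
    exact hi.1
  calc |∫ x in a..b, f x * g x| ≤ ∫ x in a..b, |f x * g x| :=
        intervalIntegral.abs_integral_le_integral_abs hab
    _ = ∫ x in Ioc a b, ‖f x‖ * ‖g x‖ := by
        simp only [intervalIntegral.integral_of_le hab, norm_eq_abs, abs_mul]
    _ ≤ _ := integral_mul_norm_le_Lp_mul_Lq hpq (memLp hpq.pos hf hfp)
        (memLp hpq.symm.pos hg hgq)
    _ = _ := by simp only [intervalIntegral.integral_of_le hab, norm_eq_abs]

theorem abs_integral_cubic_mul_le {g : ℝ → ℝ} {u v p q K : ℝ} (huv : u < v)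
    (hpq : p.HolderConjugate q) (hg : IntervalIntegrable g volume u v)
    (hgq : IntervalIntegrable (fun x => |g x| ^ q) volume u v)
    (hK : ∫ x in u..v, |g x| ^ q ≤ (v - u) * K) :
    |∫ x in u..v, (x - u) ^ 2 * (v - x) / 6 * g x| ≤
      (v - u) ^ 4 / 6 * (Gamma (2 * p + 1) * Gamma (p + 1) / Gamma (3 * p + 2)) ^ (1 / p) *
        K ^ (1 / q) := by
  set G := Gamma (2 * p + 1) * Gamma (p + 1) / Gamma (3 * p + 2)
  set h := v - u
  have hh : 0 < h := sub_pos.2 huv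
  have hp := hpq.pos
  have hgq0 : 0 ≤ ∫ x in u..v, |g x| ^ q :=
    intervalIntegral.integral_nonneg huv.le fun x _ => by positivity
  have hK0 : 0 ≤ K := nonneg_of_mul_nonneg_right (hgq0.trans hK) hh
  have hκ : Continuous fun x => (x - u) ^ 2 * (v - x) / 6 := by fun_prop
  have hholder := abs_intervalIntegral_mul_le_Lp_mul_Lq huv.le hpq hκ.aestronglyMeasurable
    hg.1.1 ((hκ.abs.rpow_const fun _ => Or.inr hp.le).intervalIntegrable u v) hgq
  rw [integral_abs_cubic_rpow huv (by linarith)] at hholder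
  have hκp : (h ^ (3 * p + 1) * G / 6 ^ p) ^ (1 / p) = h ^ (3 + 1 / p) * G ^ (1 / p) / 6 := by
    rw [div_rpow (by positivity) (by positivity), mul_rpow (by positivity) (by positivity),
      ← rpow_mul hh.le, ← rpow_mul (by norm_num), mul_one_div_cancel hp.ne', rpow_one]
    congr 2
    field_simp
  have hpow : h ^ (3 + 1 / p) * h ^ (1 / q) = h ^ 4 := by
    rw [← rpow_add hh, add_assoc, hpq.one_div_add_one_div, one_div_one]
    norm_num
  calc _ ≤ (h ^ (3 * p + 1) * G / 6 ^ p) ^ (1 / p) * (h * K) ^ (1 / q) := by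
        refine hholder.trans ?_
        gcongr
        exact one_div_nonneg.2 hpq.symm.pos.le
    _ = _ := by
        rw [hκp, mul_rpow hh.le hK0]
        linear_combination (G ^ (1 / p) * K ^ (1 / q) / 6) * hpow

theorem ConvexOn.sub_mul_le_chord {φ : ℝ → ℝ} {a b x : ℝ} (hφ : ConvexOn ℝ (Icc a b) φ)
    (hx : x ∈ Icc a b) : (b - a) * φ x ≤ (b - x) * φ a + (x - a) * φ b := by
  rcases hx.1.eq_or_lt with rfl | hax
  · linarith
  rcases hx.2.eq_or_lt with rfl | hxb
  · linarith
  have hab := (hax.trans hxb).le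
  exact hφ.secant_mono_aux1 (left_mem_Icc.2 hab) (right_mem_Icc.2 hab) hax hxb

theorem ConvexOn.integrableOn_Icc {φ : ℝ → ℝ} {a b : ℝ} (hφ : ConvexOn ℝ (Icc a b) φ)
    (hm : AEStronglyMeasurable φ (volume.restrict (Icc a b))) : IntegrableOn φ (Icc a b) := by
  refine IntegrableOn.of_bound measure_Icc_lt_top hm
    (|max (φ a) (φ b)| + 2 * |φ ((a + b) / 2)|) ?_
  rw [ae_restrict_iff' measurableSet_Icc]
  refine ae_of_all _ fun x hx => ?_
  have hab : a ≤ b := hx.1.trans hx.2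
  have hx' : a + b - x ∈ Icc a b := ⟨by linarith [hx.2], by linarith [hx.1]⟩
  have hmax : ∀ y ∈ Icc a b, φ y ≤ max (φ a) (φ b) := fun y hy =>
    hφ.le_on_segment (left_mem_Icc.2 hab) (right_mem_Icc.2 hab) (by rwa [segment_eq_Icc hab])
  -- convexity at the midpoint of `x` and `a + b - x` bounds `φ x` from below
  have hmid : φ ((a + b) / 2) ≤ 1 / 2 * φ x + 1 / 2 * φ (a + b - x) := by
    have := hφ.2 hx hx' (by norm_num : (0 : ℝ) ≤ 1 / 2) (by norm_num : (0 : ℝ) ≤ 1 / 2)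
      (by norm_num)
    rwa [smul_eq_mul, smul_eq_mul, smul_eq_mul, smul_eq_mul,
      show 1 / 2 * x + 1 / 2 * (a + b - x) = (a + b) / 2 by ring] at this
  rw [norm_eq_abs, abs_le]
  constructor <;> linarith [hmax x hx, hmax _ hx', le_abs_self (max (φ a) (φ b)),
    neg_abs_le (max (φ a) (φ b)), le_abs_self (φ ((a + b) / 2)), neg_abs_le (φ ((a + b) / 2))]

theorem ConvexOn.intervalIntegral_le_chord {φ : ℝ → ℝ} {a b c d : ℝ}
    (hφ : ConvexOn ℝ (Icc a b) φ) (hab : a < b) (hac : a ≤ c) (hcd : c ≤ d) (hdb : d ≤ b)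
    (hi : IntervalIntegrable φ volume c d) :
    ∫ x in c..d, φ x ≤
      (d - c) * ((b - (c + d) / 2) * φ a + ((c + d) / 2 - a) * φ b) / (b - a) := by
  have hchord : Continuous fun x => ((b - x) * φ a + (x - a) * φ b) / (b - a) := by fun_prop
  calc ∫ x in c..d, φ x ≤ ∫ x in c..d, ((b - x) * φ a + (x - a) * φ b) / (b - a) :=
        intervalIntegral.integral_mono_on hcd hi (hchord.intervalIntegrable c d)
          fun x hx => (le_div_iff₀' (sub_pos.2 hab)).2
            (hφ.sub_mul_le_chord ⟨hac.trans hx.1, hx.2.trans hdb⟩)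
    _ = _ := by
        rw [intervalIntegral.integral_div, intervalIntegral.integral_add
          ((by fun_prop : Continuous fun x => (b - x) * φ a).intervalIntegrable c d)
          ((by fun_prop : Continuous fun x => (x - a) * φ b).intervalIntegrable c d),
          intervalIntegral.integral_mul_const, intervalIntegral.integral_mul_const,
          intervalIntegral.integral_comp_sub_left fun x => x,
          intervalIntegral.integral_comp_sub_right fun x => x, integral_id, integral_id]
        ring

theorem ConvexOn.integral_left_half_le {φ : ℝ → ℝ} {a b : ℝ} (hφ : ConvexOn ℝ (Icc a b) φ)
    (hab : a < b) (hi : IntervalIntegrable φ volume a ((a + b) / 2)) :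
    ∫ x in a..(a + b) / 2, φ x ≤ ((a + b) / 2 - a) * ((3 * φ a + φ b) / 4) :=
  (hφ.intervalIntegral_le_chord hab le_rfl (by linarith) (by linarith) hi).trans_eq <| by
    field_simp [(sub_pos.2 hab).ne']
    ring

theorem ConvexOn.integral_right_half_le {φ : ℝ → ℝ} {a b : ℝ} (hφ : ConvexOn ℝ (Icc a b) φ)
    (hab : a < b) (hi : IntervalIntegrable φ volume ((a + b) / 2) b) :
    ∫ x in (a + b) / 2..b, φ x ≤ ((a + b) / 2 - a) * ((φ a + 3 * φ b) / 4) :=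
  (hφ.intervalIntegral_le_chord hab (by linarith) (by linarith) le_rfl hi).trans_eq <| by
    field_simp [(sub_pos.2 hab).ne']
    ring

theorem simpson_convex_holder_general (I : Set ℝ) (hI : I.OrdConnected) (f : ℝ → ℝ)
    (a b p q : ℝ) (ha : a ∈ interior I) (hb : b ∈ interior I) (hab : a < b)
    (hd1 : ∀ x ∈ interior I, DifferentiableAt ℝ f x)
    (hd2 : ∀ x ∈ interior I, DifferentiableAt ℝ (deriv f) x)
    (hd3 : ∀ x ∈ interior I, DifferentiableAt ℝ (deriv (deriv f)) x)
    (hint : IntegrableOn (deriv (deriv (deriv f))) (Set.Icc a b))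
    (hp : 1 < p) (hpq : 1 / p + 1 / q = 1)
    (hconv : ConvexOn ℝ (Set.Icc a b) fun x => |deriv (deriv (deriv f)) x| ^ q) :
    |(∫ x in a..b, f x) - (b - a) / 6 * (f a + 4 * f ((a + b) / 2) + f b)| ≤
      (b - a) ^ 4 / 96 * ((1 : ℝ) / 4) ^ (1 / q) *
        (Gamma (2 * p + 1) * Gamma (p + 1) / Gamma (3 * p + 2)) ^ (1 / p) *
        ((|deriv (deriv (deriv f)) a| ^ q + 3 * |deriv (deriv (deriv f)) b| ^ q) ^ (1 / q) +
          (3 * |deriv (deriv (deriv f)) a| ^ q + |deriv (deriv (deriv f)) b| ^ q) ^ (1 / q)) := by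
  set g := deriv (deriv (deriv f))
  have hIcc : Icc a b ⊆ interior I := hI.interior.out ha hb
  have hpq' : p.HolderConjugate q :=
    Real.holderConjugate_iff.2 ⟨hp, by simpa only [one_div] using hpq⟩
  have hg : IntervalIntegrable g volume a b :=
    (intervalIntegrable_iff_integrableOn_Icc_of_le hab.le).2 hint
  have hφ : IntervalIntegrable (fun x => |g x| ^ q) volume a b :=
    (intervalIntegrable_iff_integrableOn_Icc_of_le hab.le).2 <| hconv.integrableOn_Icc <|
      (continuous_abs.rpow_const fun _ => Or.inr hpq'.symm.nonneg).comp_aestronglyMeasurable hint.1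
  have hgr : IntervalIntegrable (fun x => g (a + b - x)) volume a b := by
    simpa using (hg.comp_sub_left (a + b)).symm
  have hφr : IntervalIntegrable (fun x => |g (a + b - x)| ^ q) volume a b := by
    simpa using (hφ.comp_sub_left (a + b)).symm
  have hm : (a + b) / 2 ∈ uIcc a b := by rw [uIcc_of_le hab.le]; constructor <;> linarith
  have hl : uIcc a ((a + b) / 2) ⊆ uIcc a b := uIcc_subset_uIcc left_mem_uIcc hm
  have ham : a < (a + b) / 2 := by linarith
  have hbound₁ := abs_integral_cubic_mul_le ham hpq' (hg.mono_set hl) (hφ.mono_set hl)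
    (hconv.integral_left_half_le hab (hφ.mono_set hl))
  have hbound₂ := abs_integral_cubic_mul_le ham hpq' (hgr.mono_set hl) (hφr.mono_set hl) <| by
    rw [intervalIntegral.integral_comp_sub_left (fun x => |g x| ^ q), add_sub_cancel_left,
      show a + b - (a + b) / 2 = (a + b) / 2 by ring]
    exact hconv.integral_right_half_le hab (hφ.mono_set (uIcc_subset_uIcc hm right_mem_uIcc))
  rw [simpson_error_eq_integral hab.le (fun x hx => (hd1 x (hIcc hx)).hasDerivAt)
    (fun x hx => (hd2 x (hIcc hx)).hasDerivAt) (fun x hx => (hd3 x (hIcc hx)).hasDerivAt) hg]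
  refine (abs_sub _ _).trans ((add_le_add hbound₁ hbound₂).trans_eq ?_)
  rw [div_rpow (x := 3 * |g a| ^ q + |g b| ^ q) (by positivity) (by norm_num),
    div_rpow (x := |g a| ^ q + 3 * |g b| ^ q) (by positivity) (by norm_num),
    div_rpow zero_le_one (by norm_num), one_rpow]
  ring

theorem simpson_convex_holder (I : Set ℝ) (hI : I.OrdConnected) (f : ℝ → ℝ)
    (a b p q : ℝ) (ha : a ∈ interior I) (hb : b ∈ interior I) (hab : a < b)
    (hd1 : ∀ x ∈ interior I, DifferentiableAt ℝ f x)
    (hd2 : ∀ x ∈ interior I, DifferentiableAt ℝ (deriv f) x)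
    (hd3 : ∀ x ∈ interior I, DifferentiableAt ℝ (deriv (deriv f)) x)
    (hint : IntegrableOn (deriv (deriv (deriv f))) (Set.Icc a b))
    (hq : 1 < q) (hp : 1 < p) (hpq : 1 / p + 1 / q = 1)
    (hconv : ConvexOn ℝ (Set.Icc a b) fun x => |deriv (deriv (deriv f)) x| ^ q) :
    |(∫ x in a..b, f x) - (b - a) / 6 * (f a + 4 * f ((a + b) / 2) + f b)| ≤
      (b - a) ^ 4 / 96 * ((1 : ℝ) / 4) ^ (1 / q) *
        (Gamma (2 * p + 1) * Gamma (p + 1) / Gamma (3 * p + 2)) ^ (1 / p) *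
        ((|deriv (deriv (deriv f)) a| ^ q + 3 * |deriv (deriv (deriv f)) b| ^ q) ^ (1 / q) +
          (3 * |deriv (deriv (deriv f)) a| ^ q + |deriv (deriv (deriv f)) b| ^ q) ^ (1 / q)) :=
  simpson_convex_holder_general I hI f a b p q ha hb hab hd1 hd2 hd3 hint hp hpq hconv
end

section
/- Let f : I → ℝ where I ⊆ ℝ is an interval, f three times differentiable on the interior I° with f''' integrable on [a,b], where a, b ∈ I° with a < b. Suppose |f'''|^q is convex on [a,b] for some q ≥ 1. Then |∫_a^b f(x) dx − ((b−a)/6)·[f(a) + 4·f((a+b)/2) + f(b)]| ≤ ((b−a)^4/1152)·{ ((3|f'''(a)|^q + 7|f'''(b)|^q)/10)^{1/q} + ((7|f'''(a)|^q + 3|f'''(b)|^q)/10)^{1/q} }. -/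
/-!
Three integrations by parts on each half of `[a, b]`, against a cubic kernel vanishing to second
order at the outer endpoint, write the Simpson error as `∫ K f'''`. The kernel has constant sign on
each half, so Hölder's inequality with weight `|K|` bounds each half by
`(∫ |K|) ^ (1 - 1/q) * (∫ |K| |f'''| ^ q) ^ (1/q)`, and convexity bounds `|f'''| ^ q` by its chord.
What is left are integrals of polynomials: `∫ |K| = (b - a) ^ 4 / 1152` on each half, and the chord
averages `|f'''(a)| ^ q` and `|f'''(b)| ^ q` with weights `7 : 3` near `a` and `3 : 7` near `b`.
-/

open MeasureTheory Real Set

theorem integral_mul_le_integral_rpow_mul_integral_mul_rpow {α : Type*} [MeasurableSpace α]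
    {μ : Measure α} {w ψ : α → ℝ} {q : ℝ} (hq : 1 ≤ q) (hw0 : 0 ≤ᵐ[μ] w) (hψ0 : 0 ≤ᵐ[μ] ψ)
    (hw : Integrable w μ) (hψ : AEStronglyMeasurable ψ μ)
    (hwψ : Integrable (fun x => w x * ψ x ^ q) μ) :
    ∫ x, w x * ψ x ∂μ ≤ (∫ x, w x ∂μ) ^ (1 - 1 / q) * (∫ x, w x * ψ x ^ q ∂μ) ^ (1 / q) := by
  rcases hq.eq_or_lt with rfl | hq
  · simp
  set p := q.conjExponent
  have hpq : p.HolderConjugate q := (Real.HolderConjugate.conjExponent hq).symm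
  have hp_inv : 1 / p = 1 - 1 / q := by
    rw [eq_sub_iff_add_eq, one_div, one_div, hpq.inv_add_inv_eq_one]
  have rpow_one_div_rpow {s : ℝ} (hs : 0 < s) {x : α} (hx : 0 ≤ w x) :
      (w x ^ (1 / s)) ^ s = w x := by
    rw [one_div, rpow_inv_rpow hx hs.ne']
  have hFp : (fun x => (w x ^ (1 / p)) ^ p) =ᵐ[μ] w := by
    filter_upwards [hw0] with x hx
    exact rpow_one_div_rpow hpq.pos hx
  have hGq : (fun x => (w x ^ (1 / q) * ψ x) ^ q) =ᵐ[μ] fun x => w x * ψ x ^ q := by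
    filter_upwards [hw0, hψ0] with x hx hψx
    rw [mul_rpow (rpow_nonneg hx _) hψx, rpow_one_div_rpow hpq.symm.pos hx]
  have hF : MemLp (fun x => w x ^ (1 / p)) (ENNReal.ofReal p) μ := by
    rw [← integrable_norm_rpow_iff (hw.aemeasurable.pow_const _).aestronglyMeasurable
      (by simp [hpq.pos]) ENNReal.ofReal_ne_top, ENNReal.toReal_ofReal hpq.nonneg]
    refine hw.congr ?_
    filter_upwards [hw0, hFp] with x hx hxp
    rwa [norm_of_nonneg (rpow_nonneg hx _), eq_comm]
  have hG : MemLp (fun x => w x ^ (1 / q) * ψ x) (ENNReal.ofReal q) μ := by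
    rw [← integrable_norm_rpow_iff (f := fun x => w x ^ (1 / q) * ψ x)
      ((hw.aemeasurable.pow_const _).aestronglyMeasurable.mul hψ)
      (by simp [hpq.symm.pos]) ENNReal.ofReal_ne_top, ENNReal.toReal_ofReal hpq.symm.nonneg]
    refine hwψ.congr ?_
    filter_upwards [hw0, hψ0, hGq] with x hx hψx hxq
    rwa [norm_of_nonneg (mul_nonneg (rpow_nonneg hx _) hψx), eq_comm]
  calc ∫ x, w x * ψ x ∂μ = ∫ x, w x ^ (1 / p) * (w x ^ (1 / q) * ψ x) ∂μ := by
        refine integral_congr_ae ?_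
        filter_upwards [hw0] with x hx
        rw [← mul_assoc, ← rpow_add' hx (by rw [hp_inv]; norm_num), hp_inv, sub_add_cancel,
          rpow_one]
    _ ≤ (∫ x, (w x ^ (1 / p)) ^ p ∂μ) ^ (1 / p) * (∫ x, (w x ^ (1 / q) * ψ x) ^ q ∂μ) ^ (1 / q) :=
        integral_mul_le_Lp_mul_Lq_of_nonneg hpq
          (by filter_upwards [hw0] with x hx; exact rpow_nonneg hx _)
          (by filter_upwards [hw0, hψ0] with x hx hψx; exact mul_nonneg (rpow_nonneg hx _) hψx)
          hF hG
    _ = _ := by rw [integral_congr_ae hFp, integral_congr_ae hGq, hp_inv]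

theorem rpow_one_sub_one_div_mul_mul_rpow_one_div {C X : ℝ} (hC : 0 ≤ C) (hX : 0 ≤ X) (q : ℝ) :
    C ^ (1 - 1 / q) * (C * X) ^ (1 / q) = C * X ^ (1 / q) := by
  rw [mul_rpow hC hX, ← mul_assoc, ← rpow_add' hC (by norm_num), sub_add_cancel, rpow_one]

theorem ConvexOn.le_chord {φ : ℝ → ℝ} {a b x : ℝ} (hφ : ConvexOn ℝ (Icc a b) φ) (hab : a < b)
    (hx : x ∈ Icc a b) : φ x ≤ ((b - x) * φ a + (x - a) * φ b) / (b - a) := by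
  have hba : 0 < b - a := sub_pos.2 hab
  have key := hφ.2 (left_mem_Icc.2 hab.le) (right_mem_Icc.2 hab.le)
    (div_nonneg (sub_nonneg.2 hx.2) hba.le) (div_nonneg (sub_nonneg.2 hx.1) hba.le)
    (by field_simp; ring)
  simp only [smul_eq_mul] at key
  calc φ x = φ ((b - x) / (b - a) * a + (x - a) / (b - a) * b) := by congr 1; field_simp; ring
    _ ≤ _ := key
    _ = _ := by ring

theorem abs_integral_mul_le_of_abs_rpow_le {w g β : ℝ → ℝ} {l r q : ℝ} (hlr : l ≤ r)
    (hq : 1 ≤ q) (hw : ContinuousOn w (Icc l r)) (hw0 : ∀ x ∈ Icc l r, 0 ≤ w x)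
    (hg : IntegrableOn g (Icc l r)) (hβ : ContinuousOn β (Icc l r))
    (hgβ : ∀ x ∈ Icc l r, |g x| ^ q ≤ β x) :
    |∫ x in l..r, w x * g x| ≤
      (∫ x in l..r, w x) ^ (1 - 1 / q) * (∫ x in l..r, w x * β x) ^ (1 / q) := by
  have hq0 : q ≠ 0 := by positivity
  have hlr' : uIcc l r = Icc l r := uIcc_of_le hlr
  have hIoc : Ioc l r ⊆ Icc l r := Ioc_subset_Icc_self
  have hβ0 (x) (hx : x ∈ Icc l r) : 0 ≤ β x := (rpow_nonneg (abs_nonneg _) q).trans (hgβ x hx)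
  have hψ : ContinuousOn (fun x => β x ^ (1 / q)) (Icc l r) :=
    hβ.rpow_const fun _ _ => Or.inr (by positivity)
  have hψq (x) (hx : x ∈ Icc l r) : w x * (β x ^ (1 / q)) ^ q = w x * β x := by
    rw [one_div, rpow_inv_rpow (hβ0 x hx) hq0]
  have hgψ (x) (hx : x ∈ Icc l r) : |g x| ≤ β x ^ (1 / q) := by
    rw [← rpow_rpow_inv (abs_nonneg (g x)) hq0, ← one_div]
    exact rpow_le_rpow (by positivity) (hgβ x hx) (by positivity)
  have hw0' : 0 ≤ᵐ[volume.restrict (Ioc l r)] w :=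
    (ae_restrict_iff' measurableSet_Ioc).2 (ae_of_all _ fun x hx => hw0 x (hIoc hx))
  have hψ0 : 0 ≤ᵐ[volume.restrict (Ioc l r)] fun x => β x ^ (1 / q) :=
    (ae_restrict_iff' measurableSet_Ioc).2
      (ae_of_all _ fun x hx => rpow_nonneg (hβ0 x (hIoc hx)) _)
  calc |∫ x in l..r, w x * g x| ≤ ∫ x in l..r, |w x * g x| :=
        intervalIntegral.abs_integral_le_integral_abs hlr
    _ = ∫ x in l..r, w x * |g x| := intervalIntegral.integral_congr fun x hx => by
        rw [abs_mul, abs_of_nonneg (hw0 x (hlr' ▸ hx))]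
    _ ≤ ∫ x in l..r, w x * β x ^ (1 / q) := by
        refine intervalIntegral.integral_mono_on hlr ?_ ?_
          fun x hx => mul_le_mul_of_nonneg_left (hgψ x hx) (hw0 x hx)
        · exact ((intervalIntegrable_iff_integrableOn_Icc_of_le hlr).2 hg).abs.continuousOn_mul
            (hlr' ▸ hw)
        · exact (hw.mul hψ).intervalIntegrable_of_Icc hlr
    _ ≤ _ := by
        simp only [intervalIntegral.integral_of_le hlr]
        rw [← setIntegral_congr_fun measurableSet_Ioc fun x hx => hψq x (hIoc hx)]
        exact integral_mul_le_integral_rpow_mul_integral_mul_rpow hq hw0' hψ0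
          (hw.integrableOn_Icc.mono_set hIoc)
          ((hψ.mono hIoc).aestronglyMeasurable measurableSet_Ioc)
          (((hw.mul hβ).integrableOn_Icc.mono_set hIoc).congr_fun
            (fun x hx => (hψq x (hIoc hx)).symm) measurableSet_Ioc)

theorem integral_mul_third_deriv_eq {f f₁ f₂ f₃ u u₁ u₂ : ℝ → ℝ} {l r : ℝ}
    (hf : ∀ x ∈ uIcc l r, HasDerivAt f (f₁ x) x) (hf₁ : ∀ x ∈ uIcc l r, HasDerivAt f₁ (f₂ x) x)
    (hf₂ : ∀ x ∈ uIcc l r, HasDerivAt f₂ (f₃ x) x) (hf₃ : IntervalIntegrable f₃ volume l r)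
    (hu : ∀ x ∈ uIcc l r, HasDerivAt u (u₁ x) x) (hu₁ : ∀ x ∈ uIcc l r, HasDerivAt u₁ (u₂ x) x)
    (hu₂ : ∀ x ∈ uIcc l r, HasDerivAt u₂ (-1) x) :
    ∫ x in l..r, u x * f₃ x =
      u r * f₂ r - u l * f₂ l - (u₁ r * f₁ r - u₁ l * f₁ l) + (u₂ r * f r - u₂ l * f l) +
        ∫ x in l..r, f x := by
  rw [intervalIntegral.integral_mul_deriv_eq_deriv_mul hu hf₂
      (HasDerivAt.continuousOn hu₁).intervalIntegrable hf₃,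
    intervalIntegral.integral_mul_deriv_eq_deriv_mul hu₁ hf₁
      (HasDerivAt.continuousOn hu₂).intervalIntegrable
      (HasDerivAt.continuousOn hf₂).intervalIntegrable,
    intervalIntegral.integral_mul_deriv_eq_deriv_mul hu₂ hf intervalIntegrable_const
      (HasDerivAt.continuousOn hf₁).intervalIntegrable]
  simp only [neg_one_mul, intervalIntegral.integral_neg]
  ring

theorem integral_sub_sq_mul_quadratic (c k₀ k₁ k₂ l r : ℝ) :
    ∫ x in l..r, (x - c) ^ 2 * (k₀ + k₁ * (x - c) + k₂ * (x - c) ^ 2) =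
      (k₀ / 3 * (r - c) ^ 3 + k₁ / 4 * (r - c) ^ 4 + k₂ / 5 * (r - c) ^ 5) -
        (k₀ / 3 * (l - c) ^ 3 + k₁ / 4 * (l - c) ^ 4 + k₂ / 5 * (l - c) ^ 5) := by
  apply intervalIntegral.integral_eq_sub_of_hasDerivAt
  · intro x _
    have h (n : ℕ) := ((hasDerivAt_id' x).sub_const c).fun_pow n
    refine ((((h 3).const_mul (k₀ / 3)).add ((h 4).const_mul (k₁ / 4))).add
      ((h 5).const_mul (k₂ / 5))).congr_deriv ?_
    push_cast
    ring
  · exact Continuous.intervalIntegrable (by fun_prop) _ _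

/-- The Peano kernel of Simpson's rule on the half of `[a, b]` that ends at `c ∈ {a, b}`. -/
noncomputable def simpsonKernel (a b c x : ℝ) : ℝ := (x - c) ^ 2 * (a + b - 2 * x) / 12

theorem simpson_error_eq_integral_simpsonKernel {f f₁ f₂ f₃ : ℝ → ℝ} {a b : ℝ} (hab : a ≤ b)
    (hf : ∀ x ∈ Icc a b, HasDerivAt f (f₁ x) x) (hf₁ : ∀ x ∈ Icc a b, HasDerivAt f₁ (f₂ x) x)
    (hf₂ : ∀ x ∈ Icc a b, HasDerivAt f₂ (f₃ x) x) (hf₃ : IntegrableOn f₃ (Icc a b)) :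
    (∫ x in a..b, f x) - (b - a) / 6 * (f a + 4 * f ((a + b) / 2) + f b) =
      (∫ x in a..(a + b) / 2, simpsonKernel a b a x * f₃ x) +
        ∫ x in (a + b) / 2..b, simpsonKernel a b b x * f₃ x := by
  have hK (c x : ℝ) :
      HasDerivAt (simpsonKernel a b c) ((x - c) * (a + b + c - 3 * x) / 6) x :=
    (((((hasDerivAt_id' x).sub_const c).fun_pow 2).mul
      (((hasDerivAt_id' x).const_mul 2).const_sub (a + b))).div_const 12).congr_deriv
      (by push_cast; ring)
  have hK₁ (c x : ℝ) : HasDerivAt (fun y => (y - c) * (a + b + c - 3 * y) / 6)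
      ((a + b + 4 * c - 6 * x) / 6) x :=
    ((((hasDerivAt_id' x).sub_const c).mul
      (((hasDerivAt_id' x).const_mul 3).const_sub (a + b + c))).div_const 6).congr_deriv
      (by ring)
  have hK₂ (c x : ℝ) : HasDerivAt (fun y => (a + b + 4 * c - 6 * y) / 6) (-1) x :=
    ((((hasDerivAt_id' x).const_mul 6).const_sub (a + b + 4 * c)).div_const 6).congr_deriv
      (by ring)
  have half (c l r : ℝ) (hlr : uIcc l r ⊆ Icc a b) :=
    integral_mul_third_deriv_eq (fun x hx => hf x (hlr hx)) (fun x hx => hf₁ x (hlr hx))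
      (fun x hx => hf₂ x (hlr hx)) (hf₃.mono_set hlr).intervalIntegrable
      (fun x _ => hK c x) (fun x _ => hK₁ c x) (fun x _ => hK₂ c x)
  have hfc : ContinuousOn f (Icc a b) := HasDerivAt.continuousOn hf
  have hleft : uIcc a ((a + b) / 2) ⊆ Icc a b := by
    rw [uIcc_of_le (by linarith)]; exact Icc_subset_Icc_right (by linarith)
  have hright : uIcc ((a + b) / 2) b ⊆ Icc a b := by
    rw [uIcc_of_le (by linarith)]; exact Icc_subset_Icc_left (by linarith)
  rw [half a _ _ hleft, half b _ _ hright, ← intervalIntegral.integral_add_adjacent_intervals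
    ((hfc.mono hleft).intervalIntegrable) ((hfc.mono hright).intervalIntegrable)]
  simp only [simpsonKernel]
  ring

theorem integral_simpsonKernel_left (a b : ℝ) :
    ∫ x in a..(a + b) / 2, simpsonKernel a b a x = (b - a) ^ 4 / 1152 := by
  rw [intervalIntegral.integral_congr
      (g := fun x => (x - a) ^ 2 * ((b - a) / 12 + -1 / 6 * (x - a) + 0 * (x - a) ^ 2))
      (fun x _ => by simp only [simpsonKernel]; ring),
    integral_sub_sq_mul_quadratic]
  ring

theorem integral_neg_simpsonKernel_right (a b : ℝ) :
    ∫ x in (a + b) / 2..b, -simpsonKernel a b b x = (b - a) ^ 4 / 1152 := by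
  rw [intervalIntegral.integral_congr
      (g := fun x => (x - b) ^ 2 * ((b - a) / 12 + 1 / 6 * (x - b) + 0 * (x - b) ^ 2))
      (fun x _ => by simp only [simpsonKernel]; ring),
    integral_sub_sq_mul_quadratic]
  ring

theorem integral_simpsonKernel_mul_chord_left {a b : ℝ} (hab : a ≠ b) (A B : ℝ) :
    ∫ x in a..(a + b) / 2, simpsonKernel a b a x * (((b - x) * A + (x - a) * B) / (b - a)) =
      (b - a) ^ 4 / 1152 * ((7 * A + 3 * B) / 10) := by
  have hba : b - a ≠ 0 := sub_ne_zero.2 hab.symm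
  rw [intervalIntegral.integral_congr (g := fun x => (x - a) ^ 2 *
      ((b - a) * A / 12 + (B - 3 * A) / 12 * (x - a) + (A - B) / (6 * (b - a)) * (x - a) ^ 2))
    (fun x _ => by simp only [simpsonKernel]; field_simp; ring), integral_sub_sq_mul_quadratic]
  field_simp
  ring

theorem integral_neg_simpsonKernel_mul_chord_right {a b : ℝ} (hab : a ≠ b) (A B : ℝ) :
    ∫ x in (a + b) / 2..b, -simpsonKernel a b b x * (((b - x) * A + (x - a) * B) / (b - a)) =
      (b - a) ^ 4 / 1152 * ((3 * A + 7 * B) / 10) := by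
  have hba : b - a ≠ 0 := sub_ne_zero.2 hab.symm
  rw [intervalIntegral.integral_congr (g := fun x => (x - b) ^ 2 *
      ((b - a) * B / 12 + (3 * B - A) / 12 * (x - b) + (B - A) / (6 * (b - a)) * (x - b) ^ 2))
    (fun x _ => by simp only [simpsonKernel]; field_simp; ring), integral_sub_sq_mul_quadratic]
  field_simp
  ring

theorem abs_integral_simpsonKernel_mul_le_left {g : ℝ → ℝ} {a b q : ℝ} (hab : a < b)
    (hq : 1 ≤ q) (hg : IntegrableOn g (Icc a b))
    (hconv : ConvexOn ℝ (Icc a b) fun x => |g x| ^ q) :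
    |∫ x in a..(a + b) / 2, simpsonKernel a b a x * g x| ≤
      (b - a) ^ 4 / 1152 * ((7 * |g a| ^ q + 3 * |g b| ^ q) / 10) ^ (1 / q) := by
  have hsub : Icc a ((a + b) / 2) ⊆ Icc a b := Icc_subset_Icc_right (by linarith)
  have h := abs_integral_mul_le_of_abs_rpow_le (by linarith) hq
    (by unfold simpsonKernel; fun_prop : Continuous (simpsonKernel a b a)).continuousOn
    (fun x hx => div_nonneg (mul_nonneg (sq_nonneg _) (by linarith [hx.2])) (by norm_num))
    (hg.mono_set hsub) (by fun_prop : Continuous fun x =>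
      ((b - x) * |g a| ^ q + (x - a) * |g b| ^ q) / (b - a)).continuousOn
    (fun x hx => hconv.le_chord hab (hsub hx))
  rwa [integral_simpsonKernel_left, integral_simpsonKernel_mul_chord_left hab.ne,
    rpow_one_sub_one_div_mul_mul_rpow_one_div (by positivity) (by positivity)] at h

theorem abs_integral_simpsonKernel_mul_le_right {g : ℝ → ℝ} {a b q : ℝ} (hab : a < b)
    (hq : 1 ≤ q) (hg : IntegrableOn g (Icc a b))
    (hconv : ConvexOn ℝ (Icc a b) fun x => |g x| ^ q) :
    |∫ x in (a + b) / 2..b, simpsonKernel a b b x * g x| ≤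
      (b - a) ^ 4 / 1152 * ((3 * |g a| ^ q + 7 * |g b| ^ q) / 10) ^ (1 / q) := by
  have hsub : Icc ((a + b) / 2) b ⊆ Icc a b := Icc_subset_Icc_left (by linarith)
  have h := abs_integral_mul_le_of_abs_rpow_le (by linarith) hq
    (by unfold simpsonKernel; fun_prop : Continuous fun x => -simpsonKernel a b b x).continuousOn
    (fun x hx => by
      rw [simpsonKernel, ← neg_div]
      exact div_nonneg (by nlinarith [sq_nonneg (x - b), hx.1]) (by norm_num))
    (hg.mono_set hsub) (by fun_prop : Continuous fun x =>
      ((b - x) * |g a| ^ q + (x - a) * |g b| ^ q) / (b - a)).continuousOn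
    (fun x hx => hconv.le_chord hab (hsub hx))
  rw [integral_neg_simpsonKernel_right, integral_neg_simpsonKernel_mul_chord_right hab.ne,
    rpow_one_sub_one_div_mul_mul_rpow_one_div (by positivity) (by positivity),
    ← abs_neg, ← intervalIntegral.integral_neg] at h
  simpa only [neg_mul, neg_neg] using h

theorem simpson_convex_power_mean (I : Set ℝ) (hI : I.OrdConnected) (f : ℝ → ℝ)
    (a b q : ℝ) (ha : a ∈ interior I) (hb : b ∈ interior I) (hab : a < b)
    (hd1 : ∀ x ∈ interior I, DifferentiableAt ℝ f x)
    (hd2 : ∀ x ∈ interior I, DifferentiableAt ℝ (deriv f) x)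
    (hd3 : ∀ x ∈ interior I, DifferentiableAt ℝ (deriv (deriv f)) x)
    (hint : IntegrableOn (deriv (deriv (deriv f))) (Set.Icc a b))
    (hq : 1 ≤ q)
    (hconv : ConvexOn ℝ (Set.Icc a b) fun x => |deriv (deriv (deriv f)) x| ^ q) :
    |(∫ x in a..b, f x) - (b - a) / 6 * (f a + 4 * f ((a + b) / 2) + f b)| ≤
      (b - a) ^ 4 / 1152 *
        (((3 * |deriv (deriv (deriv f)) a| ^ q + 7 * |deriv (deriv (deriv f)) b| ^ q) / 10)
            ^ (1 / q) +
          ((7 * |deriv (deriv (deriv f)) a| ^ q + 3 * |deriv (deriv (deriv f)) b| ^ q) / 10)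
            ^ (1 / q)) := by
  have hsub : Icc a b ⊆ interior I := hI.interior.out ha hb
  rw [simpson_error_eq_integral_simpsonKernel hab.le (fun x hx => (hd1 x (hsub hx)).hasDerivAt)
    (fun x hx => (hd2 x (hsub hx)).hasDerivAt) (fun x hx => (hd3 x (hsub hx)).hasDerivAt) hint]
  calc _ ≤ _ := abs_add_le _ _
    _ ≤ _ := add_le_add (abs_integral_simpsonKernel_mul_le_left hab hq hint hconv)
        (abs_integral_simpsonKernel_mul_le_right hab hq hint hconv)
    _ = _ := by ring
end

section
/- Let f : I → ℝ with I ⊆ [0, ∞), f three times differentiable on the interior I° with f''' integrable on [a,b], where a, b ∈ I° with a < b. Suppose |f'''|^q is s-convex in the second sense on [a,b] for some fixed s ∈ (0,1] and q ≥ 1. Then |∫_a^b f(x) dx − ((b−a)/6)·[f(a) + 4·f((a+b)/2) + f(b)]| ≤ ((b−a)^4/6)·(1/192)^{1−1/q} · { ( (2^{−4−s}/((3+s)(4+s)))·|f'''(a)|^q + (2^{−4−s}·(34 + 2^{4+s}·(s−2) + 11s + s²)/((1+s)(2+s)(3+s)(4+s)))·|f'''(b)|^q )^{1/q} + ( (2^{−4−s}·(34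 + 2^{4+s}·(s−2) + 11s + s²)/((1+s)(2+s)(3+s)(4+s)))·|f'''(a)|^q + (2^{−4−s}/((3+s)(4+s)))·|f'''(b)|^q )^{1/q} }. -/
open MeasureTheory Real Set

/-- `g` is `s`-convex in the second sense on the set `A`: for all `x, y ∈ A` and `t ∈ [0,1]`,
`g(tx + (1-t)y) ≤ t^s g(x) + (1-t)^s g(y)`. -/
def SConvexSecondSenseOn (s : ℝ) (A : Set ℝ) (g : ℝ → ℝ) : Prop :=
  ∀ x ∈ A, ∀ y ∈ A, ∀ t ∈ Set.Icc (0 : ℝ) 1,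
    g (t * x + (1 - t) * y) ≤ t ^ s * g x + (1 - t) ^ s * g y

/-!
Integrating three times by parts against the Peano kernel `(x - a)² (c - x) / 6` on `[a, c]`,
`c` the midpoint, and against its mirror image on `[c, b]`, writes the Simpson error through
`f'''`. The substitutions `x = a + (b - a) t` and `x = b - (b - a) t` turn both halves into
`(b - a)⁴ / 6 · ∫₀^{1/2} t² (1/2 - t) G t dt`, where `G` is `f'''` along the rescaled interval,
so that `|G t|^q ≤ (1 - t)^s |G 0|^q + t^s |G 1|^q` by `s`-convexity. Hölder's inequality with
the weight `t² (1/2 - t)`, of total mass `1/192`, and the exact values of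
`∫₀^{1/2} t² (1/2 - t) t^s dt` and `∫₀^{1/2} t² (1/2 - t) (1 - t)^s dt` give the bound.
-/

theorem integral_kernel_mul_third_deriv {f f₁ f₂ f₃ : ℝ → ℝ} {e c : ℝ}
    (hf : ∀ x ∈ uIcc e c, HasDerivAt f (f₁ x) x) (hf₁ : ∀ x ∈ uIcc e c, HasDerivAt f₁ (f₂ x) x)
    (hf₂ : ∀ x ∈ uIcc e c, HasDerivAt f₂ (f₃ x) x) (hf₃ : IntervalIntegrable f₃ volume e c) :
    ∫ x in e..c, (x - e) ^ 2 * (c - x) / 6 * f₃ x =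
      (c - e) ^ 2 / 6 * f₁ c - 2 * (c - e) / 3 * f c - (c - e) / 3 * f e + ∫ x in e..c, f x := by
  -- with `K x = (x - e)² (c - x) / 6`, `(K f₂ - K' f₁ + K'' f)' = K f₃ + K''' f = K f₃ - f`
  have hderiv : ∀ x ∈ uIcc e c, HasDerivAt
      (fun y => (y - e) ^ 2 * (c - y) / 6 * f₂ y -
        (2 * (y - e) * (c - y) - (y - e) ^ 2) / 6 * f₁ y + ((2 * e + c) / 3 - y) * f y)
      ((x - e) ^ 2 * (c - x) / 6 * f₃ x - f x) x := by
    intro x hx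
    have hy : HasDerivAt (fun y => y - e) 1 x := (hasDerivAt_id x).sub_const e
    have hz : HasDerivAt (fun y => c - y) (-1) x := (hasDerivAt_id x).const_sub c
    have hK := ((hy.pow 2).mul hz).div_const 6
    have hK' := (((hy.const_mul 2).mul hz).sub (hy.pow 2)).div_const 6
    have hK'' := (hasDerivAt_id x).const_sub ((2 * e + c) / 3)
    exact (((hK.mul (hf₂ x hx)).sub (hK'.mul (hf₁ x hx))).add (hK''.mul (hf x hx))).congr_deriv
      (by norm_num; ring)
  have hfi : IntervalIntegrable f volume e c :=
    ContinuousOn.intervalIntegrable fun x hx => (hf x hx).continuousAt.continuousWithinAt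
  have hKf₃ : IntervalIntegrable (fun x => (x - e) ^ 2 * (c - x) / 6 * f₃ x) volume e c :=
    hf₃.continuousOn_mul (by fun_prop)
  have := intervalIntegral.integral_eq_sub_of_hasDerivAt hderiv (hKf₃.sub hfi)
  rw [intervalIntegral.integral_sub hKf₃ hfi] at this
  linear_combination this

theorem integral_kernel_comp_affine (h : ℝ → ℝ) {p m c : ℝ} (hc : c = p + m / 2) :
    ∫ x in p..c, (x - p) ^ 2 * (c - x) / 6 * h x =
      m ^ 4 / 6 * ∫ t in (0 : ℝ)..1 / 2, t ^ 2 * (1 / 2 - t) * h (p + m * t) := by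
  have := intervalIntegral.smul_integral_comp_add_mul (a := 0) (b := 1 / 2)
    (fun x => (x - p) ^ 2 * (c - x) / 6 * h x) m p
  rw [mul_zero, add_zero, mul_one_div, ← hc, smul_eq_mul] at this
  rw [← this, ← intervalIntegral.integral_const_mul, ← intervalIntegral.integral_const_mul]
  congr 1 with t
  rw [hc]
  ring

theorem simpson_error_eq {f f₁ f₂ f₃ : ℝ → ℝ} {a b : ℝ} (hab : a ≤ b)
    (hf : ∀ x ∈ Icc a b, HasDerivAt f (f₁ x) x) (hf₁ : ∀ x ∈ Icc a b, HasDerivAt f₁ (f₂ x) x)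
    (hf₂ : ∀ x ∈ Icc a b, HasDerivAt f₂ (f₃ x) x) (hf₃ : IntervalIntegrable f₃ volume a b) :
    (∫ x in a..b, f x) - (b - a) / 6 * (f a + 4 * f ((a + b) / 2) + f b) =
      (b - a) ^ 4 / 6 * ((∫ t in (0 : ℝ)..1 / 2, t ^ 2 * (1 / 2 - t) * f₃ (a + (b - a) * t)) -
        ∫ t in (0 : ℝ)..1 / 2, t ^ 2 * (1 / 2 - t) * f₃ (b + (a - b) * t)) := by
  have hmid : (a + b) / 2 ∈ Icc a b := ⟨by linarith, by linarith⟩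
  have ha : uIcc a ((a + b) / 2) ⊆ Icc a b := uIcc_subset_Icc (left_mem_Icc.2 hab) hmid
  have hb : uIcc b ((a + b) / 2) ⊆ Icc a b := uIcc_subset_Icc (right_mem_Icc.2 hab) hmid
  have hfi : IntervalIntegrable f volume a b :=
    ContinuousOn.intervalIntegrable fun x hx =>
      (hf x (by rwa [uIcc_of_le hab] at hx)).continuousAt.continuousWithinAt
  have hL := integral_kernel_mul_third_deriv (fun x hx => hf x (ha hx)) (fun x hx => hf₁ x (ha hx))
    (fun x hx => hf₂ x (ha hx)) (hf₃.mono_set (by rwa [uIcc_of_le hab]))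
  have hR := integral_kernel_mul_third_deriv (fun x hx => hf x (hb hx)) (fun x hx => hf₁ x (hb hx))
    (fun x hx => hf₂ x (hb hx)) (hf₃.mono_set (by rwa [uIcc_of_le hab]))
  rw [integral_kernel_comp_affine _ (m := b - a) (by ring)] at hL
  rw [integral_kernel_comp_affine _ (m := a - b) (by ring)] at hR
  have hsplit := intervalIntegral.integral_add_adjacent_intervals
    (hfi.mono_set (uIcc_of_le hab ▸ ha)) (hfi.mono_set (uIcc_of_le hab ▸ hb)).symm
  have hsymm := intervalIntegral.integral_symm (μ := volume) (f := f) b ((a + b) / 2)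
  linear_combination hR - hL - hsplit + hsymm

theorem memLp_ofReal_of_integrable_rpow {α : Type*} [MeasurableSpace α] {μ : Measure α}
    {f : α → ℝ} {p : ℝ} (hp : 0 < p) (hf : AEStronglyMeasurable f μ) (hf₀ : 0 ≤ᵐ[μ] f)
    (hi : Integrable (fun x => f x ^ p) μ) : MemLp f (ENNReal.ofReal p) μ := by
  refine (integrable_norm_rpow_iff hf (by simpa using hp) ENNReal.ofReal_ne_top).1 (hi.congr ?_)
  filter_upwards [hf₀] with x hx
  rw [ENNReal.toReal_ofReal hp.le, norm_of_nonneg hx]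

theorem integral_mul_abs_le_rpow_mul_rpow {α : Type*} [MeasurableSpace α] {μ : Measure α}
    {w g : α → ℝ} {q : ℝ} (hq : 1 ≤ q) (hw : 0 ≤ᵐ[μ] w) (hwi : Integrable w μ)
    (hg : AEStronglyMeasurable g μ) (hwg : Integrable (fun x => w x * |g x| ^ q) μ) :
    ∫ x, w x * |g x| ∂μ ≤
      (∫ x, w x ∂μ) ^ (1 - 1 / q) * (∫ x, w x * |g x| ^ q ∂μ) ^ (1 / q) := by
  rcases hq.eq_or_lt with rfl | hq₁
  · simp
  set p := q.conjExponent
  have hpq : p.HolderConjugate q := (Real.HolderConjugate.conjExponent hq₁).symm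
  set u : α → ℝ := fun x => w x ^ (1 / p)
  set v : α → ℝ := fun x => w x ^ (1 / q) * |g x|
  have hu₀ : 0 ≤ᵐ[μ] u := hw.mono fun x hx => rpow_nonneg hx _
  have hv₀ : 0 ≤ᵐ[μ] v := hw.mono fun x hx => mul_nonneg (rpow_nonneg hx _) (abs_nonneg _)
  have huv : (fun x => u x * v x) =ᵐ[μ] fun x => w x * |g x| := by
    filter_upwards [hw] with x hx
    rw [← mul_assoc, ← rpow_add' hx (by rw [hpq.one_div_add_one_div]; norm_num),
      hpq.one_div_add_one_div, div_one, rpow_one]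
  have hu : (fun x => u x ^ p) =ᵐ[μ] w := by
    filter_upwards [hw] with x hx
    rw [← rpow_mul hx, one_div_mul_cancel hpq.ne_zero, rpow_one]
  have hv : (fun x => v x ^ q) =ᵐ[μ] fun x => w x * |g x| ^ q := by
    filter_upwards [hw] with x hx
    rw [mul_rpow (rpow_nonneg hx _) (abs_nonneg _), ← rpow_mul hx,
      one_div_mul_cancel hpq.symm.ne_zero, rpow_one]
  have hwm := hwi.aestronglyMeasurable
  have hholder := integral_mul_le_Lp_mul_Lq_of_nonneg hpq hu₀ hv₀
    (memLp_ofReal_of_integrable_rpow hpq.pos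
      ((continuous_rpow_const hpq.one_div_nonneg).comp_aestronglyMeasurable hwm) hu₀
      (hwi.congr hu.symm))
    (memLp_ofReal_of_integrable_rpow hpq.symm.pos
      (((continuous_rpow_const hpq.symm.one_div_nonneg).comp_aestronglyMeasurable hwm).mul
        hg.norm) hv₀ (hwg.congr hv.symm))
  have hp : 1 / p = 1 - 1 / q := by rw [one_div, one_div, hpq.symm.one_sub_inv]
  rwa [integral_congr_ae huv, integral_congr_ae hu, integral_congr_ae hv, hp] at hholder

theorem hasDerivAt_rpow_add_one_div {p : ℝ} (hp : 0 ≤ p) (x : ℝ) :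
    HasDerivAt (fun y => y ^ (p + 1) / (p + 1)) (x ^ p) x := by
  refine ((hasDerivAt_rpow_const (p := p + 1) (Or.inr (by linarith))).div_const
    (p + 1)).congr_deriv ?_
  rw [add_sub_cancel_right]
  field_simp

theorem integral_cubic_mul_rpow {s u v : ℝ} (hs : 0 < s) (hu : 0 ≤ u) (hv : 0 ≤ v)
    (c₀ c₁ c₂ c₃ : ℝ) :
    ∫ x in u..v, (c₀ + c₁ * x + c₂ * x ^ 2 + c₃ * x ^ 3) * x ^ s =
      c₀ * ((v ^ (s + 1) - u ^ (s + 1)) / (s + 1)) +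
        c₁ * ((v ^ (s + 2) - u ^ (s + 2)) / (s + 2)) +
        c₂ * ((v ^ (s + 3) - u ^ (s + 3)) / (s + 3)) +
        c₃ * ((v ^ (s + 4) - u ^ (s + 4)) / (s + 4)) := by
  have hderiv : ∀ x ∈ uIcc u v, HasDerivAt
      (fun y => c₀ * (y ^ (s + 1) / (s + 1)) + c₁ * (y ^ (s + 2) / (s + 2)) +
        c₂ * (y ^ (s + 3) / (s + 3)) + c₃ * (y ^ (s + 4) / (s + 4)))
      ((c₀ + c₁ * x + c₂ * x ^ 2 + c₃ * x ^ 3) * x ^ s) x := by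
    intro x hx
    have hx0 : 0 ≤ x := le_trans (le_min hu hv) hx.1
    have h : ∀ n : ℕ, HasDerivAt (fun y => y ^ (s + (n + 1)) / (s + (n + 1))) (x ^ s * x ^ n) x :=
      fun n => by
        simpa only [← add_assoc, rpow_add_natCast' hx0 (by positivity : s + n ≠ 0)] using
          hasDerivAt_rpow_add_one_div (p := s + n) (by positivity) x
    have := ((((h 0).const_mul c₀).fun_add ((h 1).const_mul c₁)).fun_add
      ((h 2).const_mul c₂)).fun_add ((h 3).const_mul c₃)
    norm_num at this
    exact this.congr_deriv (by ring)
  rw [intervalIntegral.integral_eq_sub_of_hasDerivAt hderiv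
    (Continuous.intervalIntegrable (by have := continuous_rpow_const hs.le; fun_prop) u v)]
  ring

theorem half_rpow_add (s r : ℝ) : (1 / 2 : ℝ) ^ (s + r) = ((2 : ℝ) ^ s)⁻¹ * ((2 : ℝ) ^ r)⁻¹ := by
  rw [one_div, inv_rpow zero_le_two, rpow_add two_pos, mul_inv]

theorem two_rpow_neg_four_sub (s : ℝ) : (2 : ℝ) ^ (-4 - s) = ((2 : ℝ) ^ s)⁻¹ / 16 := by
  rw [show -4 - s = -(s + 4) by ring, rpow_neg zero_le_two, rpow_add two_pos]
  norm_num [div_eq_inv_mul]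

theorem integral_sq_mul_half_sub : ∫ t in (0 : ℝ)..1 / 2, t ^ 2 * (1 / 2 - t) = 1 / 192 := by
  rw [intervalIntegral.integral_eq_sub_of_hasDerivAt (f := fun t => t ^ 3 / 6 - t ^ 4 / 4)
    (fun t _ => (((hasDerivAt_pow 3 t).div_const 6).fun_sub
      ((hasDerivAt_pow 4 t).div_const 4)).congr_deriv (by push_cast; ring))
    (Continuous.intervalIntegrable (by fun_prop) _ _)]
  norm_num

theorem integral_sq_mul_half_sub_mul_rpow {s : ℝ} (hs : 0 < s) :
    ∫ t in (0 : ℝ)..1 / 2, t ^ 2 * (1 / 2 - t) * t ^ s = 2 ^ (-4 - s) / ((3 + s) * (4 + s)) := by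
  calc ∫ t in (0 : ℝ)..1 / 2, t ^ 2 * (1 / 2 - t) * t ^ s
      = ∫ t in (0 : ℝ)..1 / 2, (0 + 0 * t + 1 / 2 * t ^ 2 + (-1) * t ^ 3) * t ^ s := by
        congr 1 with t; ring
    _ = _ := integral_cubic_mul_rpow hs le_rfl (by norm_num) _ _ _ _
    _ = 2 ^ (-4 - s) / ((3 + s) * (4 + s)) := by
      simp only [zero_mul, zero_add]
      rw [zero_rpow (by positivity), zero_rpow (by positivity), half_rpow_add, half_rpow_add,
        two_rpow_neg_four_sub]
      field_simp
      norm_num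
      ring

theorem integral_sq_mul_half_sub_mul_one_sub_rpow {s : ℝ} (hs : 0 < s) :
    ∫ t in (0 : ℝ)..1 / 2, t ^ 2 * (1 / 2 - t) * (1 - t) ^ s =
      2 ^ (-4 - s) * (34 + 2 ^ (4 + s) * (s - 2) + 11 * s + s ^ 2) /
        ((1 + s) * (2 + s) * (3 + s) * (4 + s)) := by
  calc ∫ t in (0 : ℝ)..1 / 2, t ^ 2 * (1 / 2 - t) * (1 - t) ^ s
      = ∫ t in (0 : ℝ)..1 / 2,
          (fun u => (-1 / 2 + 2 * u + (-5 / 2) * u ^ 2 + 1 * u ^ 3) * u ^ s) (1 - t) := by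
        congr 1 with t; ring
    _ = ∫ u in (1 - 1 / 2 : ℝ)..1 - 0, (-1 / 2 + 2 * u + (-5 / 2) * u ^ 2 + 1 * u ^ 3) * u ^ s :=
        intervalIntegral.integral_comp_sub_left
          (fun u => (-1 / 2 + 2 * u + (-5 / 2) * u ^ 2 + 1 * u ^ 3) * u ^ s) 1
    _ = ∫ u in (1 / 2 : ℝ)..1, (-1 / 2 + 2 * u + (-5 / 2) * u ^ 2 + 1 * u ^ 3) * u ^ s := by
        norm_num
    _ = _ := integral_cubic_mul_rpow hs (by norm_num) zero_le_one _ _ _ _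
    _ = _ := by
      rw [one_rpow, one_rpow, one_rpow, one_rpow, half_rpow_add, half_rpow_add, half_rpow_add,
        half_rpow_add, two_rpow_neg_four_sub, add_comm 4 s, rpow_add two_pos]
      field_simp
      norm_num
      ring

theorem SConvexSecondSenseOn.comp_affine {s : ℝ} {A B : Set ℝ} {g : ℝ → ℝ}
    (hg : SConvexSecondSenseOn s A g) {p m : ℝ} (hmaps : MapsTo (fun t => p + m * t) B A) :
    SConvexSecondSenseOn s B fun t => g (p + m * t) := by
  intro x hx y hy t ht
  convert hg _ (hmaps hx) _ (hmaps hy) t ht using 2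
  ring

theorem SConvexSecondSenseOn.le_of_mem_unitInterval {s : ℝ} {F : ℝ → ℝ}
    (h : SConvexSecondSenseOn s (Icc 0 1) F) {t : ℝ} (ht : t ∈ Icc (0 : ℝ) 1) :
    F t ≤ (1 - t) ^ s * F 0 + t ^ s * F 1 := by
  simpa [add_comm] using h 1 ⟨zero_le_one, le_rfl⟩ 0 ⟨le_rfl, zero_le_one⟩ t ht

theorem SConvexSecondSenseOn.le_add {s : ℝ} {F : ℝ → ℝ} (hs : 0 ≤ s)
    (h : SConvexSecondSenseOn s (Icc 0 1) F) (h₀ : 0 ≤ F 0) (h₁ : 0 ≤ F 1) {t : ℝ}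
    (ht : t ∈ Icc (0 : ℝ) 1) : F t ≤ F 0 + F 1 := by
  have hl : (1 - t) ^ s ≤ 1 := rpow_le_one (by linarith [ht.2]) (by linarith [ht.1]) hs
  have hr : t ^ s ≤ 1 := rpow_le_one ht.1 ht.2 hs
  nlinarith [h.le_of_mem_unitInterval ht]

theorem mapsTo_add_sub_mul_uIcc (a b : ℝ) :
    MapsTo (fun t => a + (b - a) * t) (Icc 0 1) (uIcc a b) := by
  intro t ⟨ht₀, ht₁⟩
  rcases le_total a b with hab | hba
  · rw [uIcc_of_le hab]; constructor <;> nlinarith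
  · rw [uIcc_of_ge hba]; constructor <;> nlinarith

theorem IntervalIntegrable.comp_add_sub_mul {g : ℝ → ℝ} {a b : ℝ}
    (hg : IntervalIntegrable g volume a b) (hab : a ≠ b) :
    IntervalIntegrable (fun t => g (a + (b - a) * t)) volume 0 1 := by
  simpa [sub_ne_zero.2 hab.symm] using (hg.comp_add_left a).comp_mul_left (c := b - a)

theorem integral_sq_mul_half_sub_mul_interpolant {s : ℝ} (hs : 0 < s) (A B : ℝ) :
    ∫ t in (0 : ℝ)..1 / 2, t ^ 2 * (1 / 2 - t) * ((1 - t) ^ s * A + t ^ s * B) =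
      2 ^ (-4 - s) * (34 + 2 ^ (4 + s) * (s - 2) + 11 * s + s ^ 2) /
          ((1 + s) * (2 + s) * (3 + s) * (4 + s)) * A +
        2 ^ (-4 - s) / ((3 + s) * (4 + s)) * B := by
  have hrpow := continuous_rpow_const hs.le
  rw [← integral_sq_mul_half_sub_mul_rpow hs, ← integral_sq_mul_half_sub_mul_one_sub_rpow hs,
    ← intervalIntegral.integral_mul_const, ← intervalIntegral.integral_mul_const,
    ← intervalIntegral.integral_add]
  · congr 1 with t; ring
  all_goals exact Continuous.intervalIntegrable (by fun_prop) _ _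

theorem integral_sq_mul_half_sub_mul_abs_le {G : ℝ → ℝ} {q : ℝ} (hq : 1 ≤ q)
    (hG : AEStronglyMeasurable G (volume.restrict (Ioc 0 (1 / 2))))
    (hGq : IntegrableOn (fun t => t ^ 2 * (1 / 2 - t) * |G t| ^ q) (Ioc 0 (1 / 2))) :
    ∫ t in (0 : ℝ)..1 / 2, t ^ 2 * (1 / 2 - t) * |G t| ≤
      (1 / 192) ^ (1 - 1 / q) *
        (∫ t in (0 : ℝ)..1 / 2, t ^ 2 * (1 / 2 - t) * |G t| ^ q) ^ (1 / q) := by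
  have h₀ : (0 : ℝ) ≤ 1 / 2 := by norm_num
  rw [← integral_sq_mul_half_sub]
  simp only [intervalIntegral.integral_of_le h₀]
  refine integral_mul_abs_le_rpow_mul_rpow hq ?_ (by fun_prop : Continuous _).integrableOn_Ioc
    hG hGq
  filter_upwards [ae_restrict_mem measurableSet_Ioc] with t ht
  exact mul_nonneg (sq_nonneg t) (by linarith [ht.2])

theorem abs_integral_sq_mul_half_sub_mul_le_of_sconvex {G : ℝ → ℝ} {s q : ℝ} (hs : 0 < s)
    (hq : 1 ≤ q) (hG : AEStronglyMeasurable G (volume.restrict (Ioc 0 (1 / 2))))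
    (hconv : SConvexSecondSenseOn s (Icc 0 1) fun t => |G t| ^ q) :
    |∫ t in (0 : ℝ)..1 / 2, t ^ 2 * (1 / 2 - t) * G t| ≤
      (1 / 192) ^ (1 - 1 / q) *
        (2 ^ (-4 - s) * (34 + 2 ^ (4 + s) * (s - 2) + 11 * s + s ^ 2) /
            ((1 + s) * (2 + s) * (3 + s) * (4 + s)) * |G 0| ^ q +
          2 ^ (-4 - s) / ((3 + s) * (4 + s)) * |G 1| ^ q) ^ (1 / q) := by
  set w : ℝ → ℝ := fun t => t ^ 2 * (1 / 2 - t)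
  have h₀ : (0 : ℝ) ≤ 1 / 2 := by norm_num
  have hw : ∀ t ∈ Icc (0 : ℝ) (1 / 2), 0 ≤ w t := fun t ht =>
    mul_nonneg (sq_nonneg t) (by linarith [ht.2])
  have hGq : IntegrableOn (fun t => w t * |G t| ^ q) (Ioc 0 (1 / 2)) := by
    refine Integrable.mono'
      (Continuous.integrableOn_Ioc
        (by fun_prop : Continuous fun t => w t * (|G 0| ^ q + |G 1| ^ q)))
      ((by fun_prop : Continuous w).aestronglyMeasurable.mul
        ((continuous_rpow_const (by linarith)).comp_aestronglyMeasurable hG.norm)) ?_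
    filter_upwards [ae_restrict_mem measurableSet_Ioc] with t ⟨ht₀, ht₁⟩
    rw [norm_mul, norm_of_nonneg (hw t ⟨ht₀.le, ht₁⟩), norm_of_nonneg (by positivity)]
    exact mul_le_mul_of_nonneg_left (hconv.le_add hs.le (by positivity) (by positivity)
      ⟨ht₀.le, by linarith⟩) (hw t ⟨ht₀.le, ht₁⟩)
  have habs : |∫ t in (0 : ℝ)..1 / 2, w t * G t| ≤ ∫ t in (0 : ℝ)..1 / 2, w t * |G t| := by
    refine (intervalIntegral.abs_integral_le_integral_abs h₀).trans_eq
      (intervalIntegral.integral_congr fun t ht => ?_)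
    rw [uIcc_of_le h₀] at ht
    simp only [abs_mul, abs_of_nonneg (hw t ht)]
  have hmono : ∫ t in (0 : ℝ)..1 / 2, w t * |G t| ^ q ≤
      ∫ t in (0 : ℝ)..1 / 2, w t * ((1 - t) ^ s * |G 0| ^ q + t ^ s * |G 1| ^ q) := by
    have hrpow := continuous_rpow_const hs.le
    refine intervalIntegral.integral_mono_on h₀
      ((intervalIntegrable_iff_integrableOn_Ioc_of_le h₀).2 hGq)
      (Continuous.intervalIntegrable (by fun_prop) _ _) fun t ht => ?_
    exact mul_le_mul_of_nonneg_left
      (hconv.le_of_mem_unitInterval ⟨ht.1, by linarith [ht.2]⟩) (hw t ht)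
  rw [← integral_sq_mul_half_sub_mul_interpolant hs]
  calc |∫ t in (0 : ℝ)..1 / 2, w t * G t|
      ≤ (1 / 192) ^ (1 - 1 / q) * (∫ t in (0 : ℝ)..1 / 2, w t * |G t| ^ q) ^ (1 / q) :=
        habs.trans (integral_sq_mul_half_sub_mul_abs_le hq hG hGq)
    _ ≤ _ := by
      gcongr
      exact intervalIntegral.integral_nonneg h₀ fun t ht =>
        mul_nonneg (hw t ht) (rpow_nonneg (abs_nonneg _) _)

theorem simpson_sconvex_power_mean_general (I : Set ℝ) (hI : I.OrdConnected)
    (f : ℝ → ℝ) (a b s q : ℝ)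
    (ha : a ∈ interior I) (hb : b ∈ interior I) (hab : a < b)
    (hd1 : ∀ x ∈ interior I, DifferentiableAt ℝ f x)
    (hd2 : ∀ x ∈ interior I, DifferentiableAt ℝ (deriv f) x)
    (hd3 : ∀ x ∈ interior I, DifferentiableAt ℝ (deriv (deriv f)) x)
    (hint : IntegrableOn (deriv (deriv (deriv f))) (Set.Icc a b))
    (hs : s ∈ Set.Ioc (0 : ℝ) 1) (hq : 1 ≤ q)
    (hconv : SConvexSecondSenseOn s (Set.Icc a b)
      fun x => |deriv (deriv (deriv f)) x| ^ q) :
    |(∫ x in a..b, f x) - (b - a) / 6 * (f a + 4 * f ((a + b) / 2) + f b)| ≤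
      (b - a) ^ 4 / 6 * ((1 : ℝ) / 192) ^ (1 - 1 / q) *
        (((2 : ℝ) ^ (-4 - s) / ((3 + s) * (4 + s)) * |deriv (deriv (deriv f)) a| ^ q +
              (2 : ℝ) ^ (-4 - s) * (34 + (2 : ℝ) ^ (4 + s) * (s - 2) + 11 * s + s ^ 2) /
                  ((1 + s) * (2 + s) * (3 + s) * (4 + s)) *
                |deriv (deriv (deriv f)) b| ^ q) ^ (1 / q) +
          ((2 : ℝ) ^ (-4 - s) * (34 + (2 : ℝ) ^ (4 + s) * (s - 2) + 11 * s + s ^ 2) /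
                  ((1 + s) * (2 + s) * (3 + s) * (4 + s)) *
                |deriv (deriv (deriv f)) a| ^ q +
              (2 : ℝ) ^ (-4 - s) / ((3 + s) * (4 + s)) *
                |deriv (deriv (deriv f)) b| ^ q) ^ (1 / q)) := by
  have hsub : Icc a b ⊆ interior I := hI.interior.out ha hb
  have hg : IntervalIntegrable (deriv (deriv (deriv f))) volume a b :=
    (intervalIntegrable_iff_integrableOn_Icc_of_le hab.le).2 hint
  rw [simpson_error_eq hab.le (fun x hx => (hd1 x (hsub hx)).hasDerivAt)
    (fun x hx => (hd2 x (hsub hx)).hasDerivAt) (fun x hx => (hd3 x (hsub hx)).hasDerivAt) hg]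
  have hhalf : uIcc (0 : ℝ) (1 / 2) ⊆ uIcc 0 1 := uIcc_subset_uIcc_left (by norm_num [mem_uIcc])
  have hL := abs_integral_sq_mul_half_sub_mul_le_of_sconvex hs.1 hq
    ((hg.comp_add_sub_mul hab.ne).mono_set hhalf).1.aestronglyMeasurable
    (hconv.comp_affine (uIcc_of_le hab.le ▸ mapsTo_add_sub_mul_uIcc a b))
  have hR := abs_integral_sq_mul_half_sub_mul_le_of_sconvex hs.1 hq
    ((hg.symm.comp_add_sub_mul hab.ne').mono_set hhalf).1.aestronglyMeasurable
    (hconv.comp_affine (uIcc_of_ge hab.le ▸ mapsTo_add_sub_mul_uIcc b a))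
  simp only [mul_zero, add_zero, mul_one, add_sub_cancel] at hL hR
  rw [add_comm (_ * |deriv (deriv (deriv f)) b| ^ q)] at hR
  calc _ ≤ (b - a) ^ 4 / 6 * (|∫ t in (0 : ℝ)..1 / 2,
          t ^ 2 * (1 / 2 - t) * deriv (deriv (deriv f)) (a + (b - a) * t)| +
        |∫ t in (0 : ℝ)..1 / 2,
          t ^ 2 * (1 / 2 - t) * deriv (deriv (deriv f)) (b + (a - b) * t)|) := by
        rw [abs_mul, abs_of_pos (by have := sub_pos.2 hab; positivity)]
        gcongr
        exact abs_sub _ _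
    _ ≤ _ := mul_le_mul_of_nonneg_left (add_le_add hL hR) (by positivity)
    _ = _ := by ring

theorem simpson_sconvex_power_mean (I : Set ℝ) (hI : I.OrdConnected)
    (hIsub : I ⊆ Set.Ici (0 : ℝ)) (f : ℝ → ℝ) (a b s q : ℝ)
    (ha : a ∈ interior I) (hb : b ∈ interior I) (hab : a < b)
    (hd1 : ∀ x ∈ interior I, DifferentiableAt ℝ f x)
    (hd2 : ∀ x ∈ interior I, DifferentiableAt ℝ (deriv f) x)
    (hd3 : ∀ x ∈ interior I, DifferentiableAt ℝ (deriv (deriv f)) x)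
    (hint : IntegrableOn (deriv (deriv (deriv f))) (Set.Icc a b))
    (hs : s ∈ Set.Ioc (0 : ℝ) 1) (hq : 1 ≤ q)
    (hconv : SConvexSecondSenseOn s (Set.Icc a b)
      fun x => |deriv (deriv (deriv f)) x| ^ q) :
    |(∫ x in a..b, f x) - (b - a) / 6 * (f a + 4 * f ((a + b) / 2) + f b)| ≤
      (b - a) ^ 4 / 6 * ((1 : ℝ) / 192) ^ (1 - 1 / q) *
        (((2 : ℝ) ^ (-4 - s) / ((3 + s) * (4 + s)) * |deriv (deriv (deriv f)) a| ^ q +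
              (2 : ℝ) ^ (-4 - s) * (34 + (2 : ℝ) ^ (4 + s) * (s - 2) + 11 * s + s ^ 2) /
                  ((1 + s) * (2 + s) * (3 + s) * (4 + s)) *
                |deriv (deriv (deriv f)) b| ^ q) ^ (1 / q) +
          ((2 : ℝ) ^ (-4 - s) * (34 + (2 : ℝ) ^ (4 + s) * (s - 2) + 11 * s + s ^ 2) /
                  ((1 + s) * (2 + s) * (3 + s) * (4 + s)) *
                |deriv (deriv (deriv f)) a| ^ q +
              (2 : ℝ) ^ (-4 - s) / ((3 + s) * (4 + s)) *
                |deriv (deriv (deriv f)) b| ^ q) ^ (1 / q)) :=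
  simpson_sconvex_power_mean_general I hI f a b s q ha hb hab hd1 hd2 hd3 hint hs hq hconv
end

section
/- Let f : I → ℝ where I ⊆ ℝ is an interval, with f''' absolutely continuous on the interior I°, a, b ∈ I° with a < b, and f''' integrable on [a,b]. Suppose |f'''| is a P-convex function on [a,b] and f'''((a+b)/2) = 0. Then |∫_a^b f(x) dx − ((b−a)/6)·[f(a) + 4·f((a+b)/2) + f(b)]| ≤ ((b−a)^4/1152)·( |f'''(a)| + |f'''(b)| ). -/
open MeasureTheory Real Set

/-- A real function `g` is absolutely continuous on a set `s`. -/
def AbsolutelyContinuousOnReal (g : ℝ → ℝ) (s : Set ℝ) : Prop :=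
  ∀ ε > (0 : ℝ), ∃ δ > (0 : ℝ), ∀ (n : ℕ) (u v : Fin n → ℝ),
    (∀ i, u i < v i ∧ Set.Icc (u i) (v i) ⊆ s) →
    (Pairwise fun i j => Disjoint (Set.Ioo (u i) (v i)) (Set.Ioo (u j) (v j))) →
    (∑ i, (v i - u i)) < δ → (∑ i, |g (v i) - g (u i)|) < ε

/-- `g` is `P`-convex on the set `A`: for all `x, y ∈ A` and `t ∈ [0,1]`,
`g(tx + (1-t)y) ≤ g(x) + g(y)`. -/
def PConvexOn (A : Set ℝ) (g : ℝ → ℝ) : Prop :=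
  ∀ x ∈ A, ∀ y ∈ A, ∀ t ∈ Set.Icc (0 : ℝ) 1, g (t * x + (1 - t) * y) ≤ g x + g y

/-!
Three integrations by parts write the Simpson error as `∫ₐᵇ K f'''`, where the Peano kernel is
`K x = (x - a)² (a + b - 2x) / 12` on `[a, m]` and `K x = -(b - x)² (2x - a - b) / 12` on `[m, b]`,
`m = (a + b) / 2`. The kernel keeps one sign on each half, with `∫ |K| = (b - a)⁴ / 1152` there.
Since `|f'''|` is P-convex and vanishes at `m`, `|f''' t| ≤ |f''' a| + |f''' m| = |f''' a|` on
`[a, m]`, and likewise `|f''' t| ≤ |f''' b|` on `[m, b]`.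
-/

theorem PConvexOn.le_add_of_mem_segment {A : Set ℝ} {g : ℝ → ℝ} (hg : PConvexOn A g)
    {x y z : ℝ} (hx : x ∈ A) (hy : y ∈ A) (hz : z ∈ segment ℝ x y) : g z ≤ g x + g y := by
  obtain ⟨s, t, hs, ht, hst, rfl⟩ := hz
  obtain rfl : t = 1 - s := by linarith
  exact hg x hx y hy s ⟨hs, by linarith⟩

open intervalIntegral in
theorem integral_mul_third_deriv_eq_of_hasDerivAt {f F₁ F₂ F₃ K K₁ K₂ K₃ : ℝ → ℝ} {c d : ℝ}
    (hf : ∀ x ∈ uIcc c d, HasDerivAt f (F₁ x) x)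
    (hF₁ : ∀ x ∈ uIcc c d, HasDerivAt F₁ (F₂ x) x)
    (hF₂ : ∀ x ∈ uIcc c d, HasDerivAt F₂ (F₃ x) x)
    (hK : ∀ x ∈ uIcc c d, HasDerivAt K (K₁ x) x)
    (hK₁ : ∀ x ∈ uIcc c d, HasDerivAt K₁ (K₂ x) x)
    (hK₂ : ∀ x ∈ uIcc c d, HasDerivAt K₂ (K₃ x) x)
    (hK₃ : ContinuousOn K₃ (uIcc c d)) (hF₃ : IntervalIntegrable F₃ volume c d) :
    ∫ x in c..d, K x * F₃ x =
      K d * F₂ d - K c * F₂ c - (K₁ d * F₁ d - K₁ c * F₁ c)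
        + (K₂ d * f d - K₂ c * f c) - ∫ x in c..d, K₃ x * f x := by
  rw [integral_mul_deriv_eq_deriv_mul hK hF₂
      (HasDerivAt.continuousOn hK₁).intervalIntegrable hF₃,
    integral_mul_deriv_eq_deriv_mul hK₁ hF₁
      (HasDerivAt.continuousOn hK₂).intervalIntegrable
      (HasDerivAt.continuousOn hF₂).intervalIntegrable,
    integral_mul_deriv_eq_deriv_mul hK₂ hf hK₃.intervalIntegrable
      (HasDerivAt.continuousOn hF₁).intervalIntegrable]
  ring

open intervalIntegral in
theorem abs_integral_mul_le_of_nonneg {K g : ℝ → ℝ} {c d M : ℝ} (hcd : c ≤ d)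
    (hK : ContinuousOn K (Icc c d)) (hK₀ : ∀ x ∈ Icc c d, 0 ≤ K x)
    (hg : IntervalIntegrable g volume c d) (hgM : ∀ x ∈ Icc c d, |g x| ≤ M) :
    |∫ x in c..d, K x * g x| ≤ (∫ x in c..d, K x) * M := by
  have hK' : IntervalIntegrable K volume c d := (uIcc_of_le hcd ▸ hK).intervalIntegrable
  calc |∫ x in c..d, K x * g x|
      ≤ ∫ x in c..d, |K x * g x| := abs_integral_le_integral_abs hcd
    _ ≤ ∫ x in c..d, K x * M := by
        refine integral_mono_on hcd (hg.continuousOn_mul (uIcc_of_le hcd ▸ hK)).abs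
          (hK'.mul_const M) fun x hx => ?_
        rw [abs_mul, abs_of_nonneg (hK₀ x hx)]
        exact mul_le_mul_of_nonneg_left (hgM x hx) (hK₀ x hx)
    _ = (∫ x in c..d, K x) * M := integral_mul_const M K

section PeanoKernel

variable {f F₁ F₂ F₃ : ℝ → ℝ} {a b : ℝ}

theorem integral_peanoKernel_left_mul
    (hf : ∀ x ∈ uIcc a ((a + b) / 2), HasDerivAt f (F₁ x) x)
    (hF₁ : ∀ x ∈ uIcc a ((a + b) / 2), HasDerivAt F₁ (F₂ x) x)
    (hF₂ : ∀ x ∈ uIcc a ((a + b) / 2), HasDerivAt F₂ (F₃ x) x)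
    (hF₃ : IntervalIntegrable F₃ volume a ((a + b) / 2)) :
    ∫ x in a..(a + b) / 2, (x - a) ^ 2 * (a + b - 2 * x) / 12 * F₃ x =
      (∫ x in a..(a + b) / 2, f x) + (b - a) ^ 2 / 24 * F₁ ((a + b) / 2)
        - (b - a) / 3 * f ((a + b) / 2) - (b - a) / 6 * f a := by
  have hK (x : ℝ) : HasDerivAt (fun y => (y - a) ^ 2 * (a + b - 2 * y) / 12)
      ((x - a) * (2 * a + b - 3 * x) / 6) x := by
    have := ((((hasDerivAt_id x).sub_const a).pow 2).mul
      (((hasDerivAt_id x).const_mul 2).const_sub (a + b))).div_const 12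
    exact this.congr_deriv (by simp only [id_eq, Pi.pow_apply]; ring)
  have hK₁ (x : ℝ) : HasDerivAt (fun y => (y - a) * (2 * a + b - 3 * y) / 6)
      ((5 * a + b - 6 * x) / 6) x := by
    have := (((hasDerivAt_id x).sub_const a).mul
      (((hasDerivAt_id x).const_mul 3).const_sub (2 * a + b))).div_const 6
    exact this.congr_deriv (by simp only [id_eq]; ring)
  have hK₂ (x : ℝ) : HasDerivAt (fun y => (5 * a + b - 6 * y) / 6) (-1) x := by
    have := (((hasDerivAt_id x).const_mul 6).const_sub (5 * a + b)).div_const 6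
    exact this.congr_deriv (by ring)
  rw [integral_mul_third_deriv_eq_of_hasDerivAt hf hF₁ hF₂ (fun x _ => hK x) (fun x _ => hK₁ x)
    (fun x _ => hK₂ x) continuousOn_const hF₃]
  simp only [neg_one_mul, intervalIntegral.integral_neg]
  ring

theorem integral_peanoKernel_right_mul
    (hf : ∀ x ∈ uIcc ((a + b) / 2) b, HasDerivAt f (F₁ x) x)
    (hF₁ : ∀ x ∈ uIcc ((a + b) / 2) b, HasDerivAt F₁ (F₂ x) x)
    (hF₂ : ∀ x ∈ uIcc ((a + b) / 2) b, HasDerivAt F₂ (F₃ x) x)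
    (hF₃ : IntervalIntegrable F₃ volume ((a + b) / 2) b) :
    ∫ x in (a + b) / 2..b, (b - x) ^ 2 * (2 * x - a - b) / 12 * F₃ x =
      -(∫ x in (a + b) / 2..b, f x) + (b - a) ^ 2 / 24 * F₁ ((a + b) / 2)
        + (b - a) / 3 * f ((a + b) / 2) + (b - a) / 6 * f b := by
  have hK (x : ℝ) : HasDerivAt (fun y => (b - y) ^ 2 * (2 * y - a - b) / 12)
      ((b - x) * (a + 2 * b - 3 * x) / 6) x := by
    have := ((((hasDerivAt_id x).const_sub b).pow 2).mul
      ((((hasDerivAt_id x).const_mul 2).sub_const a).sub_const b)).div_const 12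
    exact this.congr_deriv (by simp only [id_eq, Pi.pow_apply]; ring)
  have hK₁ (x : ℝ) : HasDerivAt (fun y => (b - y) * (a + 2 * b - 3 * y) / 6)
      ((6 * x - a - 5 * b) / 6) x := by
    have := (((hasDerivAt_id x).const_sub b).mul
      (((hasDerivAt_id x).const_mul 3).const_sub (a + 2 * b))).div_const 6
    exact this.congr_deriv (by simp only [id_eq]; ring)
  have hK₂ (x : ℝ) : HasDerivAt (fun y => (6 * y - a - 5 * b) / 6) 1 x := by
    have := ((((hasDerivAt_id x).const_mul 6).sub_const a).sub_const (5 * b)).div_const 6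
    exact this.congr_deriv (by ring)
  rw [integral_mul_third_deriv_eq_of_hasDerivAt hf hF₁ hF₂ (fun x _ => hK x) (fun x _ => hK₁ x)
    (fun x _ => hK₂ x) continuousOn_const hF₃]
  simp only [one_mul]
  ring

end PeanoKernel

theorem add_div_two_mem_uIcc (a b : ℝ) : (a + b) / 2 ∈ uIcc a b := by
  rcases le_total a b with h | h
  · exact Icc_subset_uIcc ⟨by linarith, by linarith⟩
  · exact Icc_subset_uIcc' ⟨by linarith, by linarith⟩

theorem simpson_error_eq_integral_peanoKernel {f F₁ F₂ F₃ : ℝ → ℝ} {a b : ℝ}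
    (hf : ∀ x ∈ uIcc a b, HasDerivAt f (F₁ x) x)
    (hF₁ : ∀ x ∈ uIcc a b, HasDerivAt F₁ (F₂ x) x)
    (hF₂ : ∀ x ∈ uIcc a b, HasDerivAt F₂ (F₃ x) x)
    (hF₃ : IntervalIntegrable F₃ volume a b) :
    (∫ x in a..b, f x) - (b - a) / 6 * (f a + 4 * f ((a + b) / 2) + f b) =
      (∫ x in a..(a + b) / 2, (x - a) ^ 2 * (a + b - 2 * x) / 12 * F₃ x)
        - ∫ x in (a + b) / 2..b, (b - x) ^ 2 * (2 * x - a - b) / 12 * F₃ x := by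
  have hL := uIcc_subset_uIcc_left (add_div_two_mem_uIcc a b)
  have hR := uIcc_subset_uIcc_right (add_div_two_mem_uIcc a b)
  have hfi : IntervalIntegrable f volume a b := (HasDerivAt.continuousOn hf).intervalIntegrable
  rw [integral_peanoKernel_left_mul (fun x hx => hf x (hL hx)) (fun x hx => hF₁ x (hL hx))
      (fun x hx => hF₂ x (hL hx)) (hF₃.mono_set hL),
    integral_peanoKernel_right_mul (fun x hx => hf x (hR hx)) (fun x hx => hF₁ x (hR hx))
      (fun x hx => hF₂ x (hR hx)) (hF₃.mono_set hR),
    ← intervalIntegral.integral_add_adjacent_intervals (hfi.mono_set hL) (hfi.mono_set hR)]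
  ring

theorem integral_peanoKernel_left (a b : ℝ) :
    ∫ x in a..(a + b) / 2, (x - a) ^ 2 * (a + b - 2 * x) / 12 = (b - a) ^ 4 / 1152 := by
  have hF (x : ℝ) : HasDerivAt (fun y => (b - a) * (y - a) ^ 3 / 36 - (y - a) ^ 4 / 24)
      ((x - a) ^ 2 * (a + b - 2 * x) / 12) x := by
    have := (((((hasDerivAt_id x).sub_const a).pow 3).const_mul (b - a)).div_const 36).sub
      ((((hasDerivAt_id x).sub_const a).pow 4).div_const 24)
    exact this.congr_deriv (by simp only [id_eq]; ring)
  rw [intervalIntegral.integral_eq_sub_of_hasDerivAt (fun x _ => hF x)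
    (Continuous.intervalIntegrable (by fun_prop) _ _)]
  ring

theorem integral_peanoKernel_right (a b : ℝ) :
    ∫ x in (a + b) / 2..b, (b - x) ^ 2 * (2 * x - a - b) / 12 = (b - a) ^ 4 / 1152 := by
  have hF (x : ℝ) : HasDerivAt (fun y => (b - y) ^ 4 / 24 - (b - a) * (b - y) ^ 3 / 36)
      ((b - x) ^ 2 * (2 * x - a - b) / 12) x := by
    have := ((((hasDerivAt_id x).const_sub b).pow 4).div_const 24).sub
      (((((hasDerivAt_id x).const_sub b).pow 3).const_mul (b - a)).div_const 36)
    exact this.congr_deriv (by simp only [id_eq]; ring)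
  rw [intervalIntegral.integral_eq_sub_of_hasDerivAt (fun x _ => hF x)
    (Continuous.intervalIntegrable (by fun_prop) _ _)]
  ring

theorem simpson_pconvex_midpoint_zero_general (I : Set ℝ) (hI : I.OrdConnected) (f : ℝ → ℝ)
    (a b : ℝ) (ha : a ∈ interior I) (hb : b ∈ interior I) (hab : a < b)
    (hd1 : ∀ x ∈ interior I, DifferentiableAt ℝ f x)
    (hd2 : ∀ x ∈ interior I, DifferentiableAt ℝ (deriv f) x)
    (hd3 : ∀ x ∈ interior I, DifferentiableAt ℝ (deriv (deriv f)) x)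
    (hint : IntegrableOn (deriv (deriv (deriv f))) (Set.Icc a b))
    (hconv : PConvexOn (Set.Icc a b) fun x => |deriv (deriv (deriv f)) x|)
    (hmid : deriv (deriv (deriv f)) ((a + b) / 2) = 0) :
    |(∫ x in a..b, f x) - (b - a) / 6 * (f a + 4 * f ((a + b) / 2) + f b)| ≤
      (b - a) ^ 4 / 1152 *
        (|deriv (deriv (deriv f)) a| + |deriv (deriv (deriv f)) b|) := by
  set F₃ := deriv (deriv (deriv f))
  have hsub : uIcc a b ⊆ interior I := uIcc_of_le hab.le ▸ hI.interior.out ha hb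
  have hF₃ : IntervalIntegrable F₃ volume a b :=
    (intervalIntegrable_iff_integrableOn_Icc_of_le hab.le).mpr hint
  rw [simpson_error_eq_integral_peanoKernel (fun x hx => (hd1 x (hsub hx)).hasDerivAt)
    (fun x hx => (hd2 x (hsub hx)).hasDerivAt) (fun x hx => (hd3 x (hsub hx)).hasDerivAt) hF₃]
  have ham : a ≤ (a + b) / 2 := by linarith
  have hmb : (a + b) / 2 ≤ b := by linarith
  have hm : (a + b) / 2 ∈ Icc a b := ⟨ham, hmb⟩
  have hleft : ∀ t ∈ Icc a ((a + b) / 2), |F₃ t| ≤ |F₃ a| := fun t ht => by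
    simpa [hmid] using hconv.le_add_of_mem_segment (left_mem_Icc.2 hab.le) hm
      (segment_eq_Icc ham ▸ ht)
  have hright : ∀ t ∈ Icc ((a + b) / 2) b, |F₃ t| ≤ |F₃ b| := fun t ht => by
    simpa [hmid] using hconv.le_add_of_mem_segment (right_mem_Icc.2 hab.le) hm
      (segment_symm ℝ _ b ▸ segment_eq_Icc hmb ▸ ht)
  have hL := uIcc_subset_uIcc_left (add_div_two_mem_uIcc a b)
  have hR := uIcc_subset_uIcc_right (add_div_two_mem_uIcc a b)
  have boundL := integral_peanoKernel_left a b ▸ abs_integral_mul_le_of_nonneg ham (by fun_prop)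
    (fun x hx => div_nonneg (mul_nonneg (sq_nonneg _) (by linarith [hx.2])) (by norm_num))
    (hF₃.mono_set hL) hleft
  have boundR := integral_peanoKernel_right a b ▸ abs_integral_mul_le_of_nonneg hmb (by fun_prop)
    (fun x hx => div_nonneg (mul_nonneg (sq_nonneg _) (by linarith [hx.1])) (by norm_num))
    (hF₃.mono_set hR) hright
  exact (abs_sub _ _).trans (by linarith)

theorem simpson_pconvex_midpoint_zero (I : Set ℝ) (hI : I.OrdConnected) (f : ℝ → ℝ)
    (a b : ℝ) (ha : a ∈ interior I) (hb : b ∈ interior I) (hab : a < b)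
    (hd1 : ∀ x ∈ interior I, DifferentiableAt ℝ f x)
    (hd2 : ∀ x ∈ interior I, DifferentiableAt ℝ (deriv f) x)
    (hd3 : ∀ x ∈ interior I, DifferentiableAt ℝ (deriv (deriv f)) x)
    (hac : AbsolutelyContinuousOnReal (deriv (deriv (deriv f))) (interior I))
    (hint : IntegrableOn (deriv (deriv (deriv f))) (Set.Icc a b))
    (hconv : PConvexOn (Set.Icc a b) fun x => |deriv (deriv (deriv f)) x|)
    (hmid : deriv (deriv (deriv f)) ((a + b) / 2) = 0) :
    |(∫ x in a..b, f x) - (b - a) / 6 * (f a + 4 * f ((a + b) / 2) + f b)| ≤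
      (b - a) ^ 4 / 1152 *
        (|deriv (deriv (deriv f)) a| + |deriv (deriv (deriv f)) b|) :=
  simpson_pconvex_midpoint_zero_general I hI f a b ha hb hab hd1 hd2 hd3 hint hconv hmid
end
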